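/- arXiv:math/0507545 — 6 statements merged into one kernel-verified Lean document; each statement's English description precedes it below -/
import Mathlib

section
/- Let ρ : (0,∞) → (0,∞) be strictly increasing and suppose that ∫_ε^1 ρ(x)^{-2} dx → ∞ as ε → 0+. Then also ∫_ε^1 (ρ(x) + √x)^{-2} dx → ∞ as ε → 0+. -/
/-!
Since `ρ` is increasing, `(ρ x + √x)⁻² ≥ h x / 4` with `h x = min ((ρ x)⁻²) x⁻¹`, and `h` is
decreasing. If `(ρ + √·)⁻²` were integrable on `(0, 1]`, so would be `h`; a decreasing integrable
function satisfies `x h(x) → 0` because `x h(x) / 2 ≤ ∫_{x/2}^x h`. Hence `h x < x⁻¹`, i.e.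
`h = ρ⁻²`, near `0`, which makes `ρ⁻²` integrable on `(0, 1]`. For nonnegative integrands that are
integrable on every `[ε, 1]`, divergence of `∫_ε^1` as `ε → 0⁺` is exactly non-integrability on
`(0, 1]`.
-/

open Real Filter MeasureTheory Set Topology

theorem AntitoneOn.integrableOn_Ioc_of_lt {f : ℝ → ℝ} {a b ε : ℝ} (hf : AntitoneOn f (Ioi a))
    (hε : a < ε) : IntegrableOn f (Ioc ε b) :=
  ((hf.mono fun _ hx => hε.trans_le hx.1).integrableOn_isCompact isCompact_Icc).mono_set
    Ioc_subset_Icc_self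

theorem not_integrableOn_Ioc_of_tendsto_intervalIntegral_atTop {f : ℝ → ℝ} {a b : ℝ}
    (hab : a < b) (h : Tendsto (fun ε => ∫ x in ε..b, f x) (𝓝[>] a) atTop) :
    ¬IntegrableOn f (Ioc a b) := fun hf => by
  have hcont : ContinuousWithinAt (fun ε => ∫ x in ε..b, f x) (Ioi a) a :=
    ((intervalIntegral.continuousOn_primitive_interval_left
      (by rwa [uIcc_of_le hab.le, integrableOn_Icc_iff_integrableOn_Ioc])) a
      left_mem_uIcc).mono_of_mem_nhdsWithin (by rw [uIcc_of_le hab.le]; exact Icc_mem_nhdsGT hab)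
  exact not_tendsto_atTop_of_tendsto_nhds hcont h

theorem tendsto_intervalIntegral_atTop_of_not_integrableOn_Ioc {f : ℝ → ℝ} {a b : ℝ}
    (hf : ∀ x ∈ Ioc a b, 0 ≤ f x) (hloc : ∀ ε > a, IntegrableOn f (Ioc ε b))
    (hnot : ¬IntegrableOn f (Ioc a b)) :
    Tendsto (fun ε => ∫ x in ε..b, f x) (𝓝[>] a) atTop := by
  have hab : a < b := by
    by_contra! hba
    exact hnot (by simp [Ioc_eq_empty_of_le hba])
  have hunbdd : ∀ I, ∃ᶠ ε in 𝓝[>] a, I < ∫ x in Ioc ε b, f x := by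
    intro I
    by_contra! hbdd
    have hpos : ∀ n : ℕ, a < a + 1 / (n + 1) := fun n => lt_add_of_pos_right a (by positivity)
    have hseq : Tendsto (fun n : ℕ => a + 1 / (n + 1)) atTop (𝓝 a) := by
      simpa using tendsto_one_div_add_atTop_nhds_zero_nat.const_add a
    refine hnot (integrableOn_Ioc_of_intervalIntegral_norm_bounded_left (I := I)
      (fun n => hloc _ (hpos n)) hseq ?_)
    filter_upwards [(tendsto_nhdsWithin_iff.2 ⟨hseq, .of_forall hpos⟩).eventually hbdd] with n hn
    refine le_of_eq_of_le (setIntegral_congr_fun measurableSet_Ioc fun x hx => ?_) hn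
    exact Real.norm_of_nonneg (hf x ⟨(hpos n).trans hx.1, hx.2⟩)
  rw [tendsto_atTop]
  intro I
  obtain ⟨ε₀, hI, hε₀⟩ := ((hunbdd I).and_eventually (Ioo_mem_nhdsGT hab)).exists
  filter_upwards [Ioo_mem_nhdsGT hε₀.1] with ε hε
  rw [intervalIntegral.integral_of_le (hε.2.trans hε₀.2).le]
  refine hI.le.trans (setIntegral_mono_set (hloc ε hε.1) ?_ ?_)
  · filter_upwards [ae_restrict_mem measurableSet_Ioc] with x hx
    exact hf x ⟨hε.1.trans hx.1, hx.2⟩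
  · exact (Ioc_subset_Ioc_left hε.2.le).eventuallyLE

theorem AntitoneOn.sub_mul_le_intervalIntegral {h : ℝ → ℝ} {a b : ℝ} (hab : a ≤ b)
    (hanti : AntitoneOn h (Icc a b)) : (b - a) * h b ≤ ∫ t in a..b, h t := by
  rw [← smul_eq_mul, ← intervalIntegral.integral_const]
  refine intervalIntegral.integral_mono_on hab intervalIntegrable_const
    (AntitoneOn.intervalIntegrable (by rwa [uIcc_of_le hab])) fun t ht => ?_
  exact hanti ht (right_mem_Icc.2 hab) ht.2

theorem AntitoneOn.tendsto_sub_mul_nhds_zero_of_integrableOn {h : ℝ → ℝ} {a b : ℝ} (hab : a < b)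
    (hanti : AntitoneOn h (Ioc a b)) (hnn : ∀ x ∈ Ioc a b, 0 ≤ h x)
    (hint : IntegrableOn h (Ioc a b)) :
    Tendsto (fun x => (x - a) * h x) (𝓝[>] a) (𝓝 0) := by
  set F := fun x => ∫ t in a..x, h t
  have hIcc : IntegrableOn h (Icc a b) := by rwa [integrableOn_Icc_iff_integrableOn_Ioc]
  have hF : Tendsto F (𝓝[>] a) (𝓝 0) := by
    have := ((intervalIntegral.continuousOn_primitive_interval (by rwa [uIcc_of_le hab.le])) a
      left_mem_uIcc).mono_of_mem_nhdsWithin (by rw [uIcc_of_le hab.le]; exact Icc_mem_nhdsGT hab)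
    simpa [F] using this.tendsto
  have hmid : Tendsto (fun x => (a + x) / 2) (𝓝[>] a) (𝓝[>] a) := by
    refine tendsto_nhdsWithin_iff.2 ⟨?_, eventually_nhdsWithin_of_forall fun x hx => ?_⟩
    · have := (show Continuous fun x : ℝ => (a + x) / 2 by fun_prop).tendsto a
      simpa [add_self_div_two] using this.mono_left nhdsWithin_le_nhds
    · simp only [mem_Ioi] at hx ⊢; linarith
  have hupper : ∀ x ∈ Ioc a b, (x - a) * h x ≤ 2 * (F x - F ((a + x) / 2)) := by
    intro x hx
    have hm : a < (a + x) / 2 := by linarith [hx.1]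
    have hmx : (a + x) / 2 ≤ x := by linarith [hx.1]
    have hii : ∀ c ∈ Icc a b, IntervalIntegrable h volume a c := fun c hc =>
      (intervalIntegrable_iff_integrableOn_Icc_of_le hc.1).2
        (hIcc.mono_set (Icc_subset_Icc_right hc.2))
    rw [intervalIntegral.integral_interval_sub_left (hii x ⟨hx.1.le, hx.2⟩)
      (hii _ ⟨hm.le, hmx.trans hx.2⟩)]
    have := (hanti.mono (Icc_subset_Ioc hm hx.2)).sub_mul_le_intervalIntegral hmx
    linarith
  refine tendsto_of_tendsto_of_tendsto_of_le_of_le' tendsto_const_nhds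
    (by simpa using ((hF.sub (hF.comp hmid)).const_mul 2)) ?_ ?_
  · filter_upwards [Ioc_mem_nhdsGT hab] with x hx
    exact mul_nonneg (sub_nonneg.2 hx.1.le) (hnn x hx)
  · filter_upwards [Ioc_mem_nhdsGT hab] with x hx
    exact hupper x hx

theorem MonotoneOn.antitoneOn_inv_sq {φ : ℝ → ℝ} {s : Set ℝ} (hmono : MonotoneOn φ s)
    (hpos : ∀ x ∈ s, 0 < φ x) : AntitoneOn (fun x => (φ x)⁻¹ ^ 2) s := fun x hx y hy hxy =>
  pow_le_pow_left₀ (inv_nonneg.2 (hpos y hy).le) (inv_anti₀ (hpos x hx) (hmono hx hy hxy)) 2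

theorem min_inv_sq_le_four_mul_inv_add_sq {p s : ℝ} (hp : 0 < p) (hs : 0 < s) :
    min (p⁻¹ ^ 2) (s⁻¹ ^ 2) ≤ 4 * (p + s)⁻¹ ^ 2 := by
  rcases le_total p s with h | h
  · calc min (p⁻¹ ^ 2) (s⁻¹ ^ 2) ≤ s⁻¹ ^ 2 := min_le_right _ _
      _ = 4 * (2 * s)⁻¹ ^ 2 := by ring
      _ ≤ 4 * (p + s)⁻¹ ^ 2 := by gcongr; linarith
  · calc min (p⁻¹ ^ 2) (s⁻¹ ^ 2) ≤ p⁻¹ ^ 2 := min_le_left _ _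
      _ = 4 * (2 * p)⁻¹ ^ 2 := by ring
      _ ≤ 4 * (p + s)⁻¹ ^ 2 := by gcongr; linarith

theorem integrableOn_inv_sq_of_integrableOn_inv_add_sqrt_sq {ρ : ℝ → ℝ} {b : ℝ} (hb : 0 < b)
    (hpos : ∀ x ∈ Ioi (0 : ℝ), 0 < ρ x) (hmono : MonotoneOn ρ (Ioi 0))
    (hint : IntegrableOn (fun x => (ρ x + √x)⁻¹ ^ 2) (Ioc 0 b)) :
    IntegrableOn (fun x => (ρ x)⁻¹ ^ 2) (Ioc 0 b) := by
  set f := fun x => (ρ x)⁻¹ ^ 2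
  set h := fun x => min (f x) x⁻¹
  have hf_anti : AntitoneOn f (Ioi 0) := hmono.antitoneOn_inv_sq hpos
  have hh_anti : AntitoneOn h (Ioc 0 b) := fun x hx y hy hxy =>
    min_le_min (hf_anti hx.1 hy.1 hxy) (inv_anti₀ hx.1 hxy)
  have hh_nonneg : ∀ x ∈ Ioc 0 b, 0 ≤ h x := fun x hx =>
    le_min (sq_nonneg _) (inv_nonneg.2 hx.1.le)
  have hh_int : IntegrableOn h (Ioc 0 b) := by
    refine Integrable.mono' (hint.const_mul 4)
      (aemeasurable_restrict_of_antitoneOn measurableSet_Ioc hh_anti).aestronglyMeasurable ?_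
    filter_upwards [ae_restrict_mem measurableSet_Ioc] with x hx
    rw [Real.norm_of_nonneg (hh_nonneg x hx)]
    simpa [h, f, sq_sqrt hx.1.le] using
      min_inv_sq_le_four_mul_inv_add_sq (hpos x hx.1) (sqrt_pos.2 hx.1)
  have hxh : Tendsto (fun x => x * h x) (𝓝[>] 0) (𝓝 0) := by
    simpa using hh_anti.tendsto_sub_mul_nhds_zero_of_integrableOn hb hh_nonneg hh_int
  obtain ⟨δ, hδ, hsub⟩ := mem_nhdsGT_iff_exists_Ioc_subset.1
    ((hxh.eventually (gt_mem_nhds one_pos)).and (Ioc_mem_nhdsGT hb))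
  have hδb : δ ≤ b := (hsub ⟨hδ, le_rfl⟩).2.2
  have hhf : EqOn h f (Ioc 0 δ) := fun x hx => by
    have hlt : h x < x⁻¹ := by
      rw [← one_div, lt_div_iff₀ hx.1, mul_comm]
      exact (hsub hx).1
    exact min_eq_left ((min_lt_iff.1 hlt).resolve_right (lt_irrefl _)).le
  rw [← Ioc_union_Ioc_eq_Ioc hδ.le hδb]
  exact ((hh_int.mono_set (Ioc_subset_Ioc_right hδb)).congr_fun hhf measurableSet_Ioc).union
    (hf_anti.integrableOn_Ioc_of_lt hδ)

/-- If `ρ` is strictly increasing and positive on `(0,∞)` and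
`∫_ε^1 ρ(x)⁻² dx → ∞` as `ε → 0⁺`, then also `∫_ε^1 (ρ(x)+√x)⁻² dx → ∞` as `ε → 0⁺`. -/
theorem integral_inv_sq_add_sqrt_tendsto_atTop
    (ρ : ℝ → ℝ) (hpos : ∀ x ∈ Set.Ioi (0 : ℝ), 0 < ρ x)
    (hmono : StrictMonoOn ρ (Set.Ioi 0))
    (hdiv : Tendsto (fun ε : ℝ => ∫ x in ε..1, (ρ x)⁻¹ ^ 2)
      (nhdsWithin 0 (Set.Ioi 0)) atTop) :
    Tendsto (fun ε : ℝ => ∫ x in ε..1, (ρ x + Real.sqrt x)⁻¹ ^ 2)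
      (nhdsWithin 0 (Set.Ioi 0)) atTop := by
  have hg_anti : AntitoneOn (fun x => (ρ x + √x)⁻¹ ^ 2) (Ioi 0) :=
    (hmono.monotoneOn.add fun x _ y _ hxy => sqrt_le_sqrt hxy).antitoneOn_inv_sq
      fun x hx => add_pos (hpos x hx) (sqrt_pos.2 hx)
  refine tendsto_intervalIntegral_atTop_of_not_integrableOn_Ioc (fun x _ => by positivity)
    (fun ε hε => hg_anti.integrableOn_Ioc_of_lt hε) fun hg => ?_
  exact not_integrableOn_Ioc_of_tendsto_intervalIntegral_atTop one_pos hdiv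
    (integrableOn_inv_sq_of_integrableOn_inv_add_sqrt_sq one_pos hpos hmono.monotoneOn hg)
end

section
/- Let 0 < a < b and let ψ : ℝ → ℝ be a nonnegative continuous function that vanishes outside the interval (a, b) and satisfies ∫_ℝ ψ(z) dz = 1. Define φ(x) = ∫_0^{|x|} ∫_0^y ψ(z) dz dy for x ∈ ℝ. Then for every x ∈ ℝ, 0 ≤ |x| − φ(x) ≤ b, and for every x the function φ is differentiable at x with |φ'(x)| ≤ 1. -/
/-!
With `g y = ∫_0^y ψ` (the distribution function of the density `ψ`) we have `0 ≤ g ≤ 1`,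
`g = 0` on `(-∞, a]` and `g = 1` on `[b, ∞)`. Hence `|x| - φ x = ∫_0^{|x|} (1 - g)` has a
nonnegative integrand that vanishes beyond `b` and is at most `1`, so it lies in `[0, b]`.
Since `g` vanishes on `(-∞, 0]`, `φ x = G x + G (-x)` with `G t = ∫_0^t g`, so `φ` is
differentiable with `φ' x = g x - g (-x)`, a difference of two numbers in `[0, 1]`.
-/

open MeasureTheory intervalIntegral Set

section Primitive

variable {ψ : ℝ → ℝ} {a y : ℝ}

theorem intervalIntegral_zero_eq_zero_of_forall_le (ha : 0 ≤ a) (hψ : ∀ z ≤ a, ψ z = 0)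
    (hy : y ≤ a) : ∫ z in (0 : ℝ)..y, ψ z = 0 := by
  have hEq : EqOn ψ 0 (uIcc 0 y) := fun z hz => hψ z (hz.2.trans (max_le ha hy))
  simpa using integral_congr hEq

theorem intervalIntegral_zero_nonneg_of_forall_le (ha : 0 ≤ a) (hψ : ∀ z ≤ a, ψ z = 0)
    (hnn : ∀ z, 0 ≤ ψ z) : 0 ≤ ∫ z in (0 : ℝ)..y, ψ z := by
  rcases le_total y a with hy | hy
  · exact (intervalIntegral_zero_eq_zero_of_forall_le ha hψ hy).ge
  · exact integral_nonneg (ha.trans hy) fun z _ => hnn z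

theorem intervalIntegral_zero_le_integral_of_forall_le (ha : 0 ≤ a) (hψ : ∀ z ≤ a, ψ z = 0)
    (hnn : ∀ z, 0 ≤ ψ z) (hint : Integrable ψ) : ∫ z in (0 : ℝ)..y, ψ z ≤ ∫ z, ψ z := by
  rcases le_total y a with hy | hy
  · rw [intervalIntegral_zero_eq_zero_of_forall_le ha hψ hy]
    exact integral_nonneg hnn
  · rw [integral_of_le (ha.trans hy)]
    exact setIntegral_le_integral hint (.of_forall hnn)

theorem intervalIntegral_zero_eq_integral (hy : 0 ≤ y) (hψ : ∀ z ∉ Ioc 0 y, ψ z = 0) :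
    ∫ z in (0 : ℝ)..y, ψ z = ∫ z, ψ z := by
  rw [integral_of_le hy, setIntegral_eq_integral_of_forall_compl_eq_zero hψ]

end Primitive

section Antiderivative

variable {g h : ℝ → ℝ} {b t : ℝ}

theorem intervalIntegral_zero_le_of_forall_ge_eq_zero (hh : Continuous h)
    (hnn : ∀ y, 0 ≤ h y) (hle : ∀ y, h y ≤ 1) (hzero : ∀ y, b ≤ y → h y = 0)
    (hb : 0 ≤ b) (ht : 0 ≤ t) : ∫ y in (0 : ℝ)..t, h y ≤ b := by
  have htail : ∫ y in b..max t b, h y = 0 := by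
    have hEq : EqOn h 0 (uIcc b (max t b)) := fun y hy =>
      hzero y ((le_min le_rfl (le_max_right t b)).trans hy.1)
    simpa using integral_congr hEq
  calc ∫ y in (0 : ℝ)..t, h y
      ≤ ∫ y in (0 : ℝ)..max t b, h y :=
        integral_mono_interval le_rfl ht (le_max_left t b)
          (.of_forall hnn) (hh.intervalIntegrable _ _)
    _ = ∫ y in (0 : ℝ)..b, h y := by
        rw [← integral_add_adjacent_intervals (hh.intervalIntegrable 0 b)
          (hh.intervalIntegrable b _), htail, add_zero]
    _ ≤ ∫ _ in (0 : ℝ)..b, (1 : ℝ) :=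
        integral_mono_on hb (hh.intervalIntegrable _ _) intervalIntegrable_const
          fun y _ => hle y
    _ = b := by simp

theorem sub_intervalIntegral_zero_mem_Icc (hg : Continuous g) (hg01 : ∀ y, g y ∈ Icc 0 1)
    (hg1 : ∀ y, b ≤ y → g y = 1) (hb : 0 ≤ b) (ht : 0 ≤ t) :
    t - ∫ y in (0 : ℝ)..t, g y ∈ Icc 0 b := by
  have hsub : t - ∫ y in (0 : ℝ)..t, g y = ∫ y in (0 : ℝ)..t, (1 - g y) := by
    rw [integral_sub intervalIntegrable_const (hg.intervalIntegrable _ _)]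
    simp
  rw [hsub]
  exact ⟨integral_nonneg ht fun y _ => sub_nonneg.mpr (hg01 y).2,
    intervalIntegral_zero_le_of_forall_ge_eq_zero (continuous_const.sub hg)
      (fun y => sub_nonneg.mpr (hg01 y).2) (fun y => by linarith [(hg01 y).1])
      (fun y hy => by rw [hg1 y hy, sub_self]) hb ht⟩

theorem hasDerivAt_intervalIntegral_zero_abs (hg : Continuous g) (hg0 : ∀ y ≤ 0, g y = 0)
    (x : ℝ) : HasDerivAt (fun x => ∫ y in (0 : ℝ)..|x|, g y) (g x - g (-x)) x := by
  have hsplit : (fun x => ∫ y in (0 : ℝ)..|x|, g y)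
      = fun x => (∫ y in (0 : ℝ)..x, g y) + ∫ y in (0 : ℝ)..-x, g y := by
    funext x
    rcases le_total 0 x with hx | hx
    · rw [abs_of_nonneg hx,
        intervalIntegral_zero_eq_zero_of_forall_le le_rfl hg0 (neg_nonpos.mpr hx), add_zero]
    · rw [abs_of_nonpos hx, intervalIntegral_zero_eq_zero_of_forall_le le_rfl hg0 hx, zero_add]
  have hneg : HasDerivAt (fun x => ∫ y in (0 : ℝ)..-x, g y) (-g (-x)) x := by
    simpa [Function.comp_def] using
      (hg.integral_hasStrictDerivAt 0 (-x)).hasDerivAt.comp x (hasDerivAt_neg x)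
  rw [hsplit, sub_eq_add_neg]
  exact (hg.integral_hasStrictDerivAt 0 x).hasDerivAt.add hneg

end Antiderivative

/-- Let `0 < a < b` and let `ψ` be a nonnegative continuous function
vanishing outside `(a,b)` with total integral `1`. Define
`φ(x) = ∫_0^{|x|} ∫_0^y ψ(z) dz dy`. Then `0 ≤ |x| − φ(x) ≤ b` for every `x`, and `φ` is
differentiable everywhere with derivative bounded by `1` in absolute value. -/
theorem abs_approx_properties
    (a b : ℝ) (ha : 0 < a) (hab : a < b)
    (ψ : ℝ → ℝ) (hcont : Continuous ψ) (hnn : ∀ z, 0 ≤ ψ z)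
    (hsupp : ∀ z ∉ Set.Ioo a b, ψ z = 0)
    (hone : ∫ z, ψ z = 1)
    (φ : ℝ → ℝ) (hφ : ∀ x, φ x = ∫ y in (0 : ℝ)..|x|, ∫ z in (0 : ℝ)..y, ψ z) :
    ∀ x : ℝ, (0 ≤ |x| - φ x ∧ |x| - φ x ≤ b) ∧
      ∃ D : ℝ, HasDerivAt φ D x ∧ |D| ≤ 1 := by
  have hψ0 : ∀ z ≤ a, ψ z = 0 := fun z hz => hsupp z fun h => hz.not_gt h.1
  have hint : Integrable ψ := hcont.integrable_of_hasCompactSupport <|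
    .intro isCompact_Icc fun z hz => hsupp z fun h => hz ⟨h.1.le, h.2.le⟩
  set g : ℝ → ℝ := fun y => ∫ z in (0 : ℝ)..y, ψ z
  have hg : Continuous g := hint.continuous_primitive 0
  have hg01 : ∀ y, g y ∈ Icc 0 1 := fun y =>
    ⟨intervalIntegral_zero_nonneg_of_forall_le ha.le hψ0 hnn,
      hone ▸ intervalIntegral_zero_le_integral_of_forall_le ha.le hψ0 hnn hint⟩
  have hg1 : ∀ y, b ≤ y → g y = 1 := fun y hy =>
    hone ▸ intervalIntegral_zero_eq_integral (ha.trans hab |>.le.trans hy)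
      fun z hz => hsupp z fun h => hz ⟨ha.trans h.1, h.2.le.trans hy⟩
  have hg0 : ∀ y ≤ 0, g y = 0 := fun y hy =>
    intervalIntegral_zero_eq_zero_of_forall_le ha.le hψ0 (hy.trans ha.le)
  obtain rfl : φ = fun x => ∫ y in (0 : ℝ)..|x|, g y := funext hφ
  intro x
  exact ⟨sub_intervalIntegral_zero_mem_Icc hg hg01 hg1 (ha.trans hab).le (abs_nonneg x),
    g x - g (-x), hasDerivAt_intervalIntegral_zero_abs hg hg0 x,
    abs_sub_le_of_nonneg_of_le (hg01 x).1 (hg01 x).2 (hg01 (-x)).1 (hg01 (-x)).2⟩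
end

section
/- Let d ≥ 1 and 0 < α < d. There exists a constant c = c(α,d) > 0 such that for all x, y ∈ ℝ^d and all t, t' > 0, ∫_{ℝ^d} ∫_{ℝ^d} p_t(x−w) p_{t'}(y−z) |w−z|^{-α} dw dz ≤ c (t+t')^{-α/2}. -/
open Real MeasureTheory

/-- The `d`-dimensional heat kernel `p_t(x) = (2πt)^{-d/2} exp(-|x|²/(2t))`. -/
noncomputable def heatKernel (d : ℕ) (t : ℝ) (x : EuclideanSpace ℝ (Fin d)) : ℝ :=
  (2 * Real.pi * t) ^ (-(d : ℝ) / 2) * Real.exp (-‖x‖ ^ 2 / (2 * t))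

/-!
Split `∫ p_s(u - z) |w - z|^{-α} dz` at `|w - z| = √s`. Near `w`, bound `p_s` by its maximum
`(2πs)^{-d/2}`; by scaling, the Riesz kernel integrates over a ball of radius `√s` to a multiple of
`s^{(d-α)/2}`. Away from `w`, bound `|w - z|^{-α}` by `s^{-α/2}` and use that `p_s` has mass one.
So the inner integral is at most `C s^{-α/2}` uniformly in `u, w`. Integrating first in the variable
whose time is larger, the unit mass of the other kernel gives the bound
`C max(t, t')^{-α/2} ≤ 2^{α/2} C (t + t')^{-α/2}`.
-/

open Metric
open scoped ENNReal

lemma ofReal_integral_le_lintegral_ofReal {X : Type*} [MeasurableSpace X] {μ : Measure X}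
    {f : X → ℝ} (hf : ∀ x, 0 ≤ f x) :
    ENNReal.ofReal (∫ x, f x ∂μ) ≤ ∫⁻ x, ENNReal.ofReal (f x) ∂μ := by
  simpa only [Real.enorm_of_nonneg (hf _), Real.enorm_of_nonneg (integral_nonneg hf)]
    using enorm_integral_le_lintegral_enorm f

lemma integral_integral_le_of_lintegral_lintegral_le {X Y : Type*} [MeasurableSpace X]
    [MeasurableSpace Y] {μ : Measure X} {ν : Measure Y} {f : X → Y → ℝ} {B : ℝ}
    (hf : ∀ x y, 0 ≤ f x y) (hB : 0 ≤ B)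
    (h : ∫⁻ x, ∫⁻ y, ENNReal.ofReal (f x y) ∂ν ∂μ ≤ ENNReal.ofReal B) :
    ∫ x, ∫ y, f x y ∂ν ∂μ ≤ B := by
  refine (ENNReal.ofReal_le_ofReal_iff hB).1 ?_
  calc ENNReal.ofReal (∫ x, ∫ y, f x y ∂ν ∂μ)
      ≤ ∫⁻ x, ENNReal.ofReal (∫ y, f x y ∂ν) ∂μ :=
        ofReal_integral_le_lintegral_ofReal fun x => integral_nonneg (hf x)
    _ ≤ ∫⁻ x, ∫⁻ y, ENNReal.ofReal (f x y) ∂ν ∂μ :=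
        lintegral_mono fun x => ofReal_integral_le_lintegral_ofReal (hf x)
    _ ≤ ENNReal.ofReal B := h

lemma lintegral_lintegral_mul_le {X Y : Type*} [MeasurableSpace X] [MeasurableSpace Y]
    {μ : Measure X} {ν : Measure Y} {a : X → ℝ≥0∞} {F : X → Y → ℝ≥0∞} {c : ℝ≥0∞}
    (ha : Measurable a) (ha1 : ∫⁻ x, a x ∂μ ≤ 1) (hF : ∀ x, Measurable (F x))
    (hFc : ∀ x, ∫⁻ y, F x y ∂ν ≤ c) :
    ∫⁻ x, ∫⁻ y, a x * F x y ∂ν ∂μ ≤ c :=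
  calc ∫⁻ x, ∫⁻ y, a x * F x y ∂ν ∂μ = ∫⁻ x, a x * ∫⁻ y, F x y ∂ν ∂μ := by
        simp_rw [lintegral_const_mul _ (hF _)]
    _ ≤ ∫⁻ x, a x * c ∂μ := by gcongr with x; exact hFc x
    _ ≤ c := by grw [lintegral_mul_const _ ha, ha1, one_mul]

lemma rpow_neg_le_two_rpow_mul_add_rpow_neg {a b β : ℝ} (hβ : 0 ≤ β) (ha : 0 < a) (hab : a ≤ b) :
    b ^ (-β) ≤ 2 ^ β * (a + b) ^ (-β) :=
  calc b ^ (-β) ≤ ((a + b) / 2) ^ (-β) :=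
        rpow_le_rpow_of_nonpos (by linarith) (by linarith) (neg_nonpos.2 hβ)
    _ = 2 ^ β * (a + b) ^ (-β) := by
        rw [div_rpow (by linarith) zero_le_two, rpow_neg zero_le_two, div_inv_eq_mul, mul_comm]

section Riesz

variable {E : Type*} [NormedAddCommGroup E] [NormedSpace ℝ E] [FiniteDimensional ℝ E]
  [MeasurableSpace E] [BorelSpace E] (μ : Measure E) [μ.IsAddHaarMeasure] {α : ℝ}

lemma setIntegral_ball_rpow_neg_norm {R : ℝ} (hR : 0 < R) :
    ∫ v in ball (0 : E) R, ‖v‖ ^ (-α) ∂μ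
      = R ^ ((Module.finrank ℝ E : ℝ) - α) * ∫ v in ball (0 : E) 1, ‖v‖ ^ (-α) ∂μ := by
  have h := Measure.setIntegral_comp_smul_of_pos μ (fun v : E => ‖v‖ ^ (-α)) (ball 0 1) hR
  simp only [smul_unitBall_of_pos hR, norm_smul, Real.norm_of_nonneg hR.le,
    mul_rpow hR.le (norm_nonneg _), integral_const_mul, smul_eq_mul] at h
  rw [rpow_sub hR, rpow_natCast, div_eq_mul_inv, ← rpow_neg hR.le, mul_assoc, h, ← mul_assoc,
    mul_inv_cancel₀ (by positivity), one_mul]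

lemma lintegral_ball_rpow_neg_norm (hd : 1 ≤ Module.finrank ℝ E)
    (hα : α < Module.finrank ℝ E) {R : ℝ} (hR : 0 < R) :
    ∫⁻ v in ball (0 : E) R, ENNReal.ofReal (‖v‖ ^ (-α)) ∂μ
      = ENNReal.ofReal (R ^ ((Module.finrank ℝ E : ℝ) - α) *
          ∫ v in ball (0 : E) 1, ‖v‖ ^ (-α) ∂μ) := by
  rw [← setIntegral_ball_rpow_neg_norm μ hR, ofReal_integral_eq_lintegral_ofReal]
  · refine integrableOn_ball_of_norm_le_rpow (C := 1) hd hα (ae_of_all _ fun v => ?_)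
      ((by fun_prop : Measurable fun v : E => ‖v‖ ^ (-α)).aestronglyMeasurable)
    rw [one_mul, Real.norm_of_nonneg (rpow_nonneg (norm_nonneg v) _)]
  · exact ae_of_all _ fun v => rpow_nonneg (norm_nonneg v) _

lemma setLIntegral_ball_comp_sub_left (f : E → ℝ≥0∞) (w : E) (r : ℝ) :
    ∫⁻ z in ball w r, f (w - z) ∂μ = ∫⁻ v in ball 0 r, f v ∂μ := by
  have hball : ball w r = (w - ·) ⁻¹' ball 0 r := by
    ext z
    simp [dist_eq_norm, norm_sub_rev]
  rw [hball, (Measure.measurePreserving_sub_left μ w).setLIntegral_comp_preimage_emb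
    (MeasurableEquiv.subLeft w).measurableEmbedding]

lemma lintegral_mul_rpow_neg_norm_sub_le (hα0 : 0 ≤ α) (hd : 1 ≤ Module.finrank ℝ E)
    (hα : α < Module.finrank ℝ E) {φ : E → ℝ≥0∞} {M : ℝ≥0∞} (hφM : ∀ z, φ z ≤ M)
    (hφ : ∫⁻ z, φ z ∂μ ≤ 1) (w : E) {r : ℝ} (hr : 0 < r) :
    ∫⁻ z, φ z * ENNReal.ofReal (‖w - z‖ ^ (-α)) ∂μ
      ≤ M * ENNReal.ofReal (r ^ ((Module.finrank ℝ E : ℝ) - α) *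
          ∫ v in ball (0 : E) 1, ‖v‖ ^ (-α) ∂μ) + ENNReal.ofReal (r ^ (-α)) := by
  rw [← lintegral_add_compl _ (measurableSet_ball (x := w) (ε := r))]
  gcongr ?_ + ?_
  · calc ∫⁻ z in ball w r, φ z * ENNReal.ofReal (‖w - z‖ ^ (-α)) ∂μ
        ≤ ∫⁻ z in ball w r, M * ENNReal.ofReal (‖w - z‖ ^ (-α)) ∂μ := by gcongr with z; exact hφM z
      _ = M * ∫⁻ v in ball 0 r, ENNReal.ofReal (‖v‖ ^ (-α)) ∂μ := by
        rw [lintegral_const_mul _ (by fun_prop),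
          setLIntegral_ball_comp_sub_left μ (fun v => ENNReal.ofReal (‖v‖ ^ (-α)))]
      _ = _ := by rw [lintegral_ball_rpow_neg_norm μ hd hα hr]
  · calc ∫⁻ z in (ball w r)ᶜ, φ z * ENNReal.ofReal (‖w - z‖ ^ (-α)) ∂μ
        ≤ ∫⁻ z in (ball w r)ᶜ, φ z * ENNReal.ofReal (r ^ (-α)) ∂μ := by
          refine setLIntegral_mono' measurableSet_ball.compl fun z hz => ?_
          have hrz : r ≤ ‖w - z‖ := by simpa [dist_eq_norm, norm_sub_rev] using hz
          gcongr φ z * ENNReal.ofReal ?_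
          exact rpow_le_rpow_of_nonpos hr hrz (neg_nonpos.2 hα0)
      _ = (∫⁻ z in (ball w r)ᶜ, φ z ∂μ) * ENNReal.ofReal (r ^ (-α)) :=
          lintegral_mul_const' _ _ ENNReal.ofReal_ne_top
      _ ≤ ENNReal.ofReal (r ^ (-α)) := by
          grw [setLIntegral_le_lintegral, hφ, one_mul]

end Riesz

@[fun_prop]
lemma continuous_heatKernel (d : ℕ) (t : ℝ) : Continuous (heatKernel d t) := by
  unfold heatKernel; fun_prop

lemma heatKernel_nonneg (d : ℕ) {t : ℝ} (ht : 0 ≤ t) (x : EuclideanSpace ℝ (Fin d)) :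
    0 ≤ heatKernel d t x := by
  unfold heatKernel; positivity

lemma heatKernel_le (d : ℕ) {t : ℝ} (ht : 0 ≤ t) (x : EuclideanSpace ℝ (Fin d)) :
    heatKernel d t x ≤ (2 * π * t) ^ (-(d : ℝ) / 2) := by
  unfold heatKernel
  refine mul_le_of_le_one_right (by positivity) (exp_le_one_iff.2 ?_)
  rw [neg_div, neg_nonpos]
  positivity

lemma integral_heatKernel (d : ℕ) {t : ℝ} (ht : 0 < t) :
    ∫ x, heatKernel d t x = 1 := by
  have hexp : ∀ x : EuclideanSpace ℝ (Fin d),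
      exp (-‖x‖ ^ 2 / (2 * t)) = exp (-(2 * t)⁻¹ * ‖x‖ ^ 2) := fun x => by ring_nf
  simp only [heatKernel, hexp, integral_const_mul]
  rw [GaussianFourier.integral_rexp_neg_mul_sq_norm (by positivity), finrank_euclideanSpace_fin,
    div_inv_eq_mul, show π * (2 * t) = 2 * π * t by ring, ← rpow_add (by positivity), neg_div,
    neg_add_cancel, rpow_zero]

lemma lintegral_heatKernel_sub (d : ℕ) {t : ℝ} (ht : 0 < t) (u : EuclideanSpace ℝ (Fin d)) :
    ∫⁻ z, ENNReal.ofReal (heatKernel d t (u - z)) = 1 := by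
  have hint : Integrable (heatKernel d t) :=
    .of_integral_ne_zero (by rw [integral_heatKernel d ht]; exact one_ne_zero)
  rw [lintegral_sub_left_eq_self (fun v => ENNReal.ofReal (heatKernel d t v)),
    ← ofReal_integral_eq_lintegral_ofReal hint (ae_of_all _ (heatKernel_nonneg d ht.le)),
    integral_heatKernel d ht, ENNReal.ofReal_one]

-- `(2π)^{-d/2}` times the Riesz mass of the unit ball bounds the part near `w`, `1` the far part.
noncomputable def heatRieszConst (d : ℕ) (α : ℝ) : ℝ :=
  (2 * π) ^ (-(d : ℝ) / 2) * (∫ v in ball (0 : EuclideanSpace ℝ (Fin d)) 1, ‖v‖ ^ (-α)) + 1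

lemma heatRieszConst_pos (d : ℕ) (α : ℝ) : 0 < heatRieszConst d α := by
  have hI := setIntegral_nonneg (μ := volume) (measurableSet_ball (x := 0) (ε := 1))
    fun (v : EuclideanSpace ℝ (Fin d)) _ => rpow_nonneg (norm_nonneg v) (-α)
  exact add_pos_of_nonneg_of_pos (mul_nonneg (by positivity) hI) one_pos

lemma lintegral_heatKernel_mul_rpow_neg_norm_sub_le {d : ℕ} {α : ℝ} (hα0 : 0 ≤ α) (hαd : α < d)
    {s : ℝ} (hs : 0 < s) (u w : EuclideanSpace ℝ (Fin d)) :
    ∫⁻ z, ENNReal.ofReal (heatKernel d s (u - z)) * ENNReal.ofReal (‖w - z‖ ^ (-α))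
      ≤ ENNReal.ofReal (heatRieszConst d α * s ^ (-α / 2)) := by
  have hd : 1 ≤ Module.finrank ℝ (EuclideanSpace ℝ (Fin d)) := by
    rw [finrank_euclideanSpace_fin]; exact Nat.cast_pos.1 (hα0.trans_lt hαd)
  have hbound := lintegral_mul_rpow_neg_norm_sub_le volume hα0 hd (by simpa using hαd)
    (fun z => ENNReal.ofReal_le_ofReal (heatKernel_le d hs.le (u - z)))
    (lintegral_heatKernel_sub d hs u).le w (rpow_pos_of_pos hs (1 / 2))
  refine hbound.trans_eq ?_
  have hr : (s ^ (1 / 2 : ℝ)) ^ (-α) = s ^ (-α / 2) := by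
    rw [← rpow_mul hs.le]; ring_nf
  have hr' : (2 * π * s) ^ (-(d : ℝ) / 2) * (s ^ (1 / 2 : ℝ)) ^ ((d : ℝ) - α)
      = (2 * π) ^ (-(d : ℝ) / 2) * s ^ (-α / 2) := by
    rw [mul_rpow (by positivity) hs.le, ← rpow_mul hs.le, mul_assoc, ← rpow_add hs]
    ring_nf
  rw [finrank_euclideanSpace_fin, ← ENNReal.ofReal_mul (by positivity),
    ← ENNReal.ofReal_add (by positivity) (by positivity), heatRieszConst]
  congr 1
  linear_combination (∫ v in ball (0 : EuclideanSpace ℝ (Fin d)) 1, ‖v‖ ^ (-α)) * hr' + hr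

lemma lintegral_lintegral_heatKernel_riesz_le {d : ℕ} {α : ℝ} (hα0 : 0 ≤ α) (hαd : α < d)
    (x y : EuclideanSpace ℝ (Fin d)) {t t' : ℝ} (ht : 0 < t) (ht' : 0 < t') :
    ∫⁻ w, ∫⁻ z, ENNReal.ofReal (heatKernel d t (x - w)) * ENNReal.ofReal (heatKernel d t' (y - z))
        * ENNReal.ofReal (‖w - z‖ ^ (-α))
      ≤ ENNReal.ofReal (heatRieszConst d α * 2 ^ (α / 2) * (t + t') ^ (-α / 2)) := by
  wlog htt' : t ≤ t' generalizing x y t t'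
  · rw [lintegral_lintegral_swap (by fun_prop)]
    simpa only [mul_comm (ENNReal.ofReal (heatKernel d t _)), norm_sub_rev, add_comm t']
      using this y x ht' ht (le_of_not_ge htt')
  simp_rw [mul_assoc]
  refine lintegral_lintegral_mul_le (by fun_prop) (lintegral_heatKernel_sub d ht x).le
    (fun _ => by fun_prop) (fun w => lintegral_heatKernel_mul_rpow_neg_norm_sub_le hα0 hαd ht' y w)
    |>.trans (ENNReal.ofReal_le_ofReal ?_)
  gcongr
  · exact (heatRieszConst_pos d α).le
  · simpa only [neg_div] using rpow_neg_le_two_rpow_mul_add_rpow_neg (by positivity) ht htt'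

theorem heatKernel_double_convolution_riesz_bound_general
    (d : ℕ) (α : ℝ) (hα0 : 0 < α) (hαd : α < d) :
    ∃ c : ℝ, 0 < c ∧ ∀ (x y : EuclideanSpace ℝ (Fin d)) (t t' : ℝ), 0 < t → 0 < t' →
      (∫ w : EuclideanSpace ℝ (Fin d), ∫ z : EuclideanSpace ℝ (Fin d),
          heatKernel d t (x - w) * heatKernel d t' (y - z) * ‖w - z‖ ^ (-α))
        ≤ c * (t + t') ^ (-α / 2) := by
  refine ⟨heatRieszConst d α * 2 ^ (α / 2), mul_pos (heatRieszConst_pos d α) (by positivity),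
    fun x y t t' ht ht' => ?_⟩
  have hp {s : ℝ} (hs : 0 < s) (v : EuclideanSpace ℝ (Fin d)) := heatKernel_nonneg d hs.le v
  refine integral_integral_le_of_lintegral_lintegral_le
    (fun w z => mul_nonneg (mul_nonneg (hp ht _) (hp ht' _)) (rpow_nonneg (norm_nonneg _) _))
    (mul_nonneg (mul_nonneg (heatRieszConst_pos d α).le (by positivity)) (by positivity)) ?_
  simp_rw [ENNReal.ofReal_mul (mul_nonneg (hp ht _) (hp ht' _)), ENNReal.ofReal_mul (hp ht _)]
  exact lintegral_lintegral_heatKernel_riesz_le hα0.le hαd x y ht ht'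

/-- For `0 < α < d` there is a constant `c = c(α,d) > 0` such that for all
`x, y ∈ ℝ^d` and `t, t' > 0`,
`∫∫ p_t(x−w) p_{t'}(y−z) |w−z|^{-α} dw dz ≤ c (t+t')^{-α/2}`. -/
theorem heatKernel_double_convolution_riesz_bound
    (d : ℕ) (hd : 1 ≤ d) (α : ℝ) (hα0 : 0 < α) (hαd : α < d) :
    ∃ c : ℝ, 0 < c ∧ ∀ (x y : EuclideanSpace ℝ (Fin d)) (t t' : ℝ), 0 < t → 0 < t' →
      (∫ w : EuclideanSpace ℝ (Fin d), ∫ z : EuclideanSpace ℝ (Fin d),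
          heatKernel d t (x - w) * heatKernel d t' (y - z) * ‖w - z‖ ^ (-α))
        ≤ c * (t + t') ^ (-α / 2) :=
  heatKernel_double_convolution_riesz_bound_general d α hα0 hαd
end

section
/- Let d ≥ 1. There exists a constant c = c(d) > 0 such that for every 0 < β ≤ 1, every λ' ≥ 0, all x, y ∈ ℝ^d, and all 0 < t ≤ t', ∫_{ℝ^d} |p_t(x−w) − p_{t'}(y−w)| e^{λ'|w|} dw ≤ c e^{2(λ')² t'} (e^{λ'|x|} + e^{λ'|y|}) e^{2βλ'|x−y|} ( t^{-β/2} |x−y|^β + t^{-β} (t'−t)^β ). -/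
/-!
Completing the square gives `p_s(x - w) e^{λ|w|} ≤ 2^{d/2} e^{λ²s} e^{λ|x|} p_{2s}(x - w)`,
and doubling the time once more absorbs a factor `|x - w| ≲ √s` or `|x - w|² ≲ s`. Since every
`p_s(x - ·)` has integral one, such pointwise dominations integrate to explicit constants.
Bounding `|p_t(x - w) - p_{t'}(y - w)|` by `p_t(x - w) + p_{t'}(y - w)` bounds the weighted
integral by `M := (d + 4) 2^d e^{λ²t'} (e^{λ|x|} + e^{λ|y|})`. When `|x - y| ≤ √t`, passing
through `p_t(y - w)` and using `|e^{-u} - e^{-v}| ≤ |u - v| (e^{-u} + e^{-v})` in space and in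
time bounds it by `M (|x - y| / √t + (t' - t) / t)`. Interpolating with `min 1 s ≤ s ^ β` and
the subadditivity of `s ↦ s ^ β` gives the claim.
-/

open Real MeasureTheory

lemma mul_exp_neg_div_le (a : ℝ) {c : ℝ} (hc : 0 < c) : a * exp (-(a / c)) ≤ c := by
  have h := (mul_exp_neg_le_exp_neg_one (a / c)).trans (exp_le_one_iff.2 (by norm_num))
  calc a * exp (-(a / c)) = c * (a / c * exp (-(a / c))) := by field_simp
    _ ≤ c * 1 := by gcongr
    _ = c := mul_one c

lemma mul_exp_neg_sq_div_le (r : ℝ) {c : ℝ} (hc : 0 < c) :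
    r * exp (-(r ^ 2 / (2 * c))) ≤ √c := by
  refine Real.le_sqrt_of_sq_le ?_
  calc (r * exp (-(r ^ 2 / (2 * c)))) ^ 2 = r ^ 2 * exp (-(r ^ 2 / c)) := by
        rw [mul_pow, ← exp_nat_mul]; congr 2; field_simp; ring
    _ ≤ c := mul_exp_neg_div_le _ hc

lemma exp_neg_sub_exp_neg_le (u v : ℝ) :
    exp (-v) - exp (-u) ≤ (u - v) * exp (-v) := by
  have hsplit : exp (-u) = exp (-v) * exp (-(u - v)) := by rw [← exp_add]; ring_nf
  nlinarith [one_sub_le_exp_neg (u - v), exp_pos (-v)]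

lemma abs_exp_neg_sub_exp_neg_le (u v : ℝ) :
    |exp (-u) - exp (-v)| ≤ |u - v| * (exp (-u) + exp (-v)) := by
  rcases le_total u v with h | h
  · rw [abs_of_nonneg (sub_nonneg.2 (exp_le_exp.2 (neg_le_neg h))), abs_of_nonpos (sub_nonpos.2 h)]
    nlinarith [exp_neg_sub_exp_neg_le u v, exp_neg_sub_exp_neg_le v u, exp_pos (-u), exp_pos (-v)]
  · rw [abs_of_nonpos (sub_nonpos.2 (exp_le_exp.2 (neg_le_neg h))), abs_of_nonneg (sub_nonneg.2 h)]
    nlinarith [exp_neg_sub_exp_neg_le u v, exp_neg_sub_exp_neg_le v u, exp_pos (-u), exp_pos (-v)]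

lemma rpow_neg_sub_rpow_neg_le {a b p : ℝ} (ha : 0 < a) (hab : a ≤ b) (hp : 0 ≤ p) :
    a ^ (-p) - b ^ (-p) ≤ p * ((b - a) / a) * a ^ (-p) := by
  have hb : 0 < b := ha.trans_le hab
  have hlog : log b - log a ≤ (b - a) / a := by
    rw [← log_div hb.ne' ha.ne']
    calc log (b / a) ≤ b / a - 1 := log_le_sub_one_of_pos (by positivity)
      _ = (b - a) / a := by field_simp
  rw [rpow_def_of_pos ha, rpow_def_of_pos hb, mul_neg, mul_neg]
  calc exp (-(log a * p)) - exp (-(log b * p)) ≤ (log b * p - log a * p) * exp (-(log a * p)) :=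
        exp_neg_sub_exp_neg_le _ _
    _ ≤ p * ((b - a) / a) * exp (-(log a * p)) := by
        gcongr
        nlinarith

section HeatKernel

variable {d : ℕ} {s t t' lam : ℝ}

local notation "ℝᵈ" => EuclideanSpace ℝ (Fin d)

lemma heatKernel_nonneg_s9 (hs : 0 ≤ s) (z : ℝᵈ) : 0 ≤ heatKernel d s z := by
  unfold heatKernel
  have : 0 ≤ (2 * π * s) ^ (-(d : ℝ) / 2) := rpow_nonneg (by positivity) _
  positivity

lemma heatKernel_eq_two_rpow_mul (hs : 0 < s) (z : ℝᵈ) :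
    heatKernel d s z = 2 ^ ((d : ℝ) / 2) * heatKernel d (2 * s) z * exp (-(‖z‖ ^ 2 / (4 * s))) := by
  have hsplit : exp (-‖z‖ ^ 2 / (2 * s)) =
      exp (-‖z‖ ^ 2 / (2 * (2 * s))) * exp (-(‖z‖ ^ 2 / (4 * s))) := by
    rw [← exp_add]; congr 1; field_simp; ring
  have hpref : (2 * π * s) ^ (-(d : ℝ) / 2) =
      2 ^ ((d : ℝ) / 2) * (2 * π * (2 * s)) ^ (-(d : ℝ) / 2) := by
    have h2 : (2 : ℝ) ^ ((d : ℝ) / 2) * 2 ^ (-(d : ℝ) / 2) = 1 := by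
      rw [← rpow_add two_pos, show (d : ℝ) / 2 + -(d : ℝ) / 2 = 0 by ring, rpow_zero]
    rw [show 2 * π * (2 * s) = 2 * (2 * π * s) by ring, mul_rpow zero_le_two (by positivity),
      ← mul_assoc, h2, one_mul]
  rw [heatKernel, heatKernel, hsplit, hpref]
  ring

lemma heatKernel_le_two_rpow_mul (hs : 0 < s) (z : ℝᵈ) :
    heatKernel d s z ≤ 2 ^ ((d : ℝ) / 2) * heatKernel d (2 * s) z := by
  rw [heatKernel_eq_two_rpow_mul hs]
  have := heatKernel_nonneg_s9 (d := d) (by positivity : 0 ≤ 2 * s) z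
  exact mul_le_of_le_one_right (by positivity) (exp_le_one_iff.2 (neg_nonpos.2 (by positivity)))

lemma norm_mul_heatKernel_le (hs : 0 < s) (z : ℝᵈ) :
    ‖z‖ * heatKernel d s z ≤ 2 ^ ((d : ℝ) / 2) * √(2 * s) * heatKernel d (2 * s) z := by
  have := heatKernel_nonneg_s9 (d := d) (by positivity : 0 ≤ 2 * s) z
  have h := mul_exp_neg_sq_div_le ‖z‖ (by positivity : 0 < 2 * s)
  rw [show 2 * (2 * s) = 4 * s by ring] at h
  rw [heatKernel_eq_two_rpow_mul hs]
  calc ‖z‖ * (2 ^ ((d : ℝ) / 2) * heatKernel d (2 * s) z * exp (-(‖z‖ ^ 2 / (4 * s))))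
      = 2 ^ ((d : ℝ) / 2) * heatKernel d (2 * s) z * (‖z‖ * exp (-(‖z‖ ^ 2 / (4 * s)))) := by ring
    _ ≤ 2 ^ ((d : ℝ) / 2) * heatKernel d (2 * s) z * √(2 * s) := by gcongr
    _ = 2 ^ ((d : ℝ) / 2) * √(2 * s) * heatKernel d (2 * s) z := by ring

lemma sq_norm_mul_heatKernel_le (hs : 0 < s) (z : ℝᵈ) :
    ‖z‖ ^ 2 * heatKernel d s z ≤ 2 ^ ((d : ℝ) / 2) * (4 * s) * heatKernel d (2 * s) z := by
  have := heatKernel_nonneg_s9 (d := d) (by positivity : 0 ≤ 2 * s) z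
  have h := mul_exp_neg_div_le (‖z‖ ^ 2) (by positivity : 0 < 4 * s)
  rw [heatKernel_eq_two_rpow_mul hs]
  calc ‖z‖ ^ 2 * (2 ^ ((d : ℝ) / 2) * heatKernel d (2 * s) z * exp (-(‖z‖ ^ 2 / (4 * s))))
      = 2 ^ ((d : ℝ) / 2) * heatKernel d (2 * s) z * (‖z‖ ^ 2 * exp (-(‖z‖ ^ 2 / (4 * s)))) := by
        ring
    _ ≤ 2 ^ ((d : ℝ) / 2) * heatKernel d (2 * s) z * (4 * s) := by gcongr
    _ = 2 ^ ((d : ℝ) / 2) * (4 * s) * heatKernel d (2 * s) z := by ring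

lemma heatKernel_mul_exp_norm_le (hs : 0 < s) (lam : ℝ) (z : ℝᵈ) :
    heatKernel d s z * exp (lam * ‖z‖) ≤
      2 ^ ((d : ℝ) / 2) * exp (lam ^ 2 * s) * heatKernel d (2 * s) z := by
  have := heatKernel_nonneg_s9 (d := d) (by positivity : 0 ≤ 2 * s) z
  have hsq : lam * ‖z‖ - ‖z‖ ^ 2 / (4 * s) ≤ lam ^ 2 * s := by
    have : 0 ≤ (‖z‖ - 2 * lam * s) ^ 2 / (4 * s) := by positivity
    have e : (‖z‖ - 2 * lam * s) ^ 2 / (4 * s) = ‖z‖ ^ 2 / (4 * s) - lam * ‖z‖ + lam ^ 2 * s := by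
      field_simp; ring
    linarith
  rw [heatKernel_eq_two_rpow_mul hs]
  calc 2 ^ ((d : ℝ) / 2) * heatKernel d (2 * s) z * exp (-(‖z‖ ^ 2 / (4 * s))) * exp (lam * ‖z‖)
      = 2 ^ ((d : ℝ) / 2) * heatKernel d (2 * s) z * exp (lam * ‖z‖ - ‖z‖ ^ 2 / (4 * s)) := by
        rw [mul_assoc, ← exp_add]; ring_nf
    _ ≤ 2 ^ ((d : ℝ) / 2) * heatKernel d (2 * s) z * exp (lam ^ 2 * s) := by gcongr
    _ = 2 ^ ((d : ℝ) / 2) * exp (lam ^ 2 * s) * heatKernel d (2 * s) z := by ring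

lemma integral_heatKernel_s9 (hs : 0 < s) : ∫ z : ℝᵈ, heatKernel d s z = 1 := by
  have hexp : ∀ z : ℝᵈ, exp (-‖z‖ ^ 2 / (2 * s)) = exp (-(2 * s)⁻¹ * ‖z‖ ^ 2) := fun z ↦ by
    congr 1; ring
  simp only [heatKernel, hexp]
  rw [integral_const_mul, GaussianFourier.integral_rexp_neg_mul_sq_norm (by positivity),
    finrank_euclideanSpace_fin, div_inv_eq_mul, ← mul_assoc, neg_div,
    rpow_neg (by positivity), show π * 2 * s = 2 * π * s by ring, inv_mul_cancel₀ (by positivity)]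

lemma integrable_heatKernel (hs : 0 < s) : Integrable (heatKernel d s) :=
  .of_integral_ne_zero (by rw [integral_heatKernel_s9 hs]; exact one_ne_zero)

lemma integral_heatKernel_sub (hs : 0 < s) (x : ℝᵈ) : ∫ w, heatKernel d s (x - w) = 1 := by
  rw [integral_sub_left_eq_self (heatKernel d s) volume x, integral_heatKernel_s9 hs]

lemma integrable_heatKernel_sub (hs : 0 < s) (x : ℝᵈ) :
    Integrable (fun w ↦ heatKernel d s (x - w)) :=
  (integrable_heatKernel hs).comp_sub_left x

lemma abs_heatKernel_sub_heatKernel_le (ht : 0 < t) (a b : ℝᵈ) :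
    |heatKernel d t a - heatKernel d t b| ≤
      ‖a - b‖ / (2 * t) * (‖a‖ + ‖b‖) * (heatKernel d t a + heatKernel d t b) := by
  have hc : 0 ≤ (2 * π * t) ^ (-((d : ℝ) / 2)) := rpow_nonneg (by positivity) _
  have hsq : |‖a‖ ^ 2 / (2 * t) - ‖b‖ ^ 2 / (2 * t)| ≤ ‖a - b‖ / (2 * t) * (‖a‖ + ‖b‖) := by
    rw [← sub_div, abs_div, abs_of_pos (by positivity : 0 < 2 * t), div_mul_eq_mul_div,
      sq_sub_sq, abs_mul, abs_of_nonneg (by positivity : 0 ≤ ‖a‖ + ‖b‖), mul_comm]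
    gcongr
    exact abs_norm_sub_norm_le a b
  simp only [heatKernel, neg_div, ← mul_sub, abs_mul, abs_of_nonneg hc]
  calc (2 * π * t) ^ (-((d : ℝ) / 2)) * |exp (-(‖a‖ ^ 2 / (2 * t))) - exp (-(‖b‖ ^ 2 / (2 * t)))|
      ≤ (2 * π * t) ^ (-((d : ℝ) / 2)) * (|‖a‖ ^ 2 / (2 * t) - ‖b‖ ^ 2 / (2 * t)| *
          (exp (-(‖a‖ ^ 2 / (2 * t))) + exp (-(‖b‖ ^ 2 / (2 * t))))) := by
        gcongr; exact abs_exp_neg_sub_exp_neg_le _ _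
    _ ≤ (2 * π * t) ^ (-((d : ℝ) / 2)) * (‖a - b‖ / (2 * t) * (‖a‖ + ‖b‖) *
          (exp (-(‖a‖ ^ 2 / (2 * t))) + exp (-(‖b‖ ^ 2 / (2 * t))))) := by gcongr
    _ = _ := by ring

lemma abs_heatKernel_sub_heatKernel_le_of_le (ht : 0 < t) (htt' : t ≤ t') (z : ℝᵈ) :
    |heatKernel d t z - heatKernel d t' z| ≤
      d / 2 * ((t' - t) / t) * heatKernel d t z +
        (t' - t) / (2 * t * t') * (‖z‖ ^ 2 * heatKernel d t' z) := by
  have ht' : 0 < t' := ht.trans_le htt'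
  set c := (2 * π * t) ^ (-((d : ℝ) / 2))
  set c' := (2 * π * t') ^ (-((d : ℝ) / 2))
  set e := exp (-(‖z‖ ^ 2 / (2 * t)))
  set e' := exp (-(‖z‖ ^ 2 / (2 * t')))
  have hc' : 0 ≤ c' := rpow_nonneg (by positivity) _
  have hcc' : c' ≤ c := rpow_le_rpow_of_nonpos (by positivity) (by gcongr) (neg_nonpos.2 (by positivity))
  have hee' : e ≤ e' := exp_le_exp.2 (neg_le_neg (by gcongr))
  have hc : c - c' ≤ d / 2 * ((t' - t) / t) * c := by
    convert rpow_neg_sub_rpow_neg_le (by positivity) (by gcongr : 2 * π * t ≤ 2 * π * t')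
      (by positivity : 0 ≤ (d : ℝ) / 2) using 3
    field_simp
  have he : e' - e ≤ (t' - t) / (2 * t * t') * ‖z‖ ^ 2 * e' := by
    convert exp_neg_sub_exp_neg_le (‖z‖ ^ 2 / (2 * t)) (‖z‖ ^ 2 / (2 * t')) using 2
    field_simp
  have hsplit : c * e - c' * e' = (c - c') * e - c' * (e' - e) := by ring
  simp only [heatKernel, neg_div]
  rw [hsplit, abs_sub_le_iff]
  constructor <;> nlinarith [exp_pos (-(‖z‖ ^ 2 / (2 * t))), mul_le_mul_of_nonneg_left he hc']

lemma integral_mul_heatKernel_sub_add (hs : 0 < s) (ht : 0 < t) (x y : ℝᵈ) (A α β : ℝ) :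
    ∫ w, A * (α * heatKernel d s (x - w) + β * heatKernel d t (y - w)) = A * (α + β) := by
  have := integrable_heatKernel_sub hs x
  have := integrable_heatKernel_sub ht y
  rw [integral_const_mul, integral_add (by fun_prop) (by fun_prop), integral_const_mul,
    integral_const_mul, integral_heatKernel_sub hs, integral_heatKernel_sub ht, mul_one, mul_one]

lemma heatKernel_sub_mul_exp_le (hs : 0 < s) (hlam : 0 ≤ lam) (x w : ℝᵈ) :
    heatKernel d s (x - w) * exp (lam * ‖w‖) ≤
      2 ^ ((d : ℝ) / 2) * exp (lam ^ 2 * s) * exp (lam * ‖x‖) * heatKernel d (2 * s) (x - w) := by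
  have hw : exp (lam * ‖w‖) ≤ exp (lam * ‖x - w‖) * exp (lam * ‖x‖) := by
    rw [← exp_add, ← mul_add]; gcongr; linarith [norm_le_norm_add_norm_sub x w]
  calc heatKernel d s (x - w) * exp (lam * ‖w‖)
      ≤ heatKernel d s (x - w) * exp (lam * ‖x - w‖) * exp (lam * ‖x‖) := by
        rw [mul_assoc]; gcongr; exact heatKernel_nonneg_s9 hs.le _
    _ ≤ 2 ^ ((d : ℝ) / 2) * exp (lam ^ 2 * s) * heatKernel d (2 * s) (x - w) * exp (lam * ‖x‖) := by
        exact mul_le_mul_of_nonneg_right (heatKernel_mul_exp_norm_le hs lam _) (exp_nonneg _)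
    _ = _ := by ring

lemma mul_heatKernel_sub_mul_exp_le (hs : 0 < s) (hlam : 0 ≤ lam) {m C : ℝ} (hm : 0 ≤ m)
    {x w : ℝᵈ}
    (h : m * heatKernel d (2 * s) (x - w) ≤ 2 ^ ((d : ℝ) / 2) * C * heatKernel d (4 * s) (x - w)) :
    m * (heatKernel d s (x - w) * exp (lam * ‖w‖)) ≤
      2 ^ d * C * (exp (lam ^ 2 * s) * exp (lam * ‖x‖) * heatKernel d (4 * s) (x - w)) := by
  have h2 : (2 : ℝ) ^ ((d : ℝ) / 2) * 2 ^ ((d : ℝ) / 2) = 2 ^ d := by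
    rw [← rpow_add two_pos, add_halves, rpow_natCast]
  calc m * (heatKernel d s (x - w) * exp (lam * ‖w‖))
      ≤ m * (2 ^ ((d : ℝ) / 2) * exp (lam ^ 2 * s) * exp (lam * ‖x‖) *
          heatKernel d (2 * s) (x - w)) :=
        mul_le_mul_of_nonneg_left (heatKernel_sub_mul_exp_le hs hlam x w) hm
    _ = 2 ^ ((d : ℝ) / 2) * exp (lam ^ 2 * s) * exp (lam * ‖x‖) *
          (m * heatKernel d (2 * s) (x - w)) := by ring
    _ ≤ 2 ^ ((d : ℝ) / 2) * exp (lam ^ 2 * s) * exp (lam * ‖x‖) *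
          (2 ^ ((d : ℝ) / 2) * C * heatKernel d (4 * s) (x - w)) := by gcongr
    _ = _ := by rw [← h2]; ring

lemma heatKernel_sub_mul_exp_le_four_mul (hs : 0 < s) (hlam : 0 ≤ lam) (x w : ℝᵈ) :
    heatKernel d s (x - w) * exp (lam * ‖w‖) ≤
      2 ^ d * (exp (lam ^ 2 * s) * exp (lam * ‖x‖) * heatKernel d (4 * s) (x - w)) := by
  simpa using mul_heatKernel_sub_mul_exp_le hs hlam zero_le_one (C := 1) (by
    simpa [show 2 * (2 * s) = 4 * s by ring] using
      heatKernel_le_two_rpow_mul (by positivity : 0 < 2 * s) (x - w))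

lemma sq_norm_mul_heatKernel_sub_mul_exp_le (hs : 0 < s) (hlam : 0 ≤ lam) (x w : ℝᵈ) :
    ‖x - w‖ ^ 2 * (heatKernel d s (x - w) * exp (lam * ‖w‖)) ≤
      2 ^ d * (8 * s) * (exp (lam ^ 2 * s) * exp (lam * ‖x‖) * heatKernel d (4 * s) (x - w)) :=
  mul_heatKernel_sub_mul_exp_le hs hlam (by positivity) (by
    simpa [show 2 * (2 * s) = 4 * s by ring, show 4 * (2 * s) = 8 * s by ring] using
      sq_norm_mul_heatKernel_le (by positivity : 0 < 2 * s) (x - w))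

lemma two_norm_add_mul_heatKernel_sub_mul_exp_le (hs : 0 < s) (hlam : 0 ≤ lam) {h : ℝ}
    (h0 : 0 ≤ h) (hh : h ≤ √s) (x w : ℝᵈ) :
    (2 * ‖x - w‖ + h) * (heatKernel d s (x - w) * exp (lam * ‖w‖)) ≤
      2 ^ d * (5 * √s) * (exp (lam ^ 2 * s) * exp (lam * ‖x‖) * heatKernel d (4 * s) (x - w)) := by
  refine mul_heatKernel_sub_mul_exp_le hs hlam (by positivity) ?_
  have h1 := norm_mul_heatKernel_le (d := d) (by positivity : 0 < 2 * s) (x - w)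
  have h2 := heatKernel_le_two_rpow_mul (d := d) (by positivity : 0 < 2 * s) (x - w)
  rw [show 2 * (2 * s) = 4 * s by ring] at h1 h2
  rw [show √(4 * s) = 2 * √s by
    rw [sqrt_mul zero_le_four, show (4 : ℝ) = 2 ^ 2 by norm_num, sqrt_sq zero_le_two]] at h1
  have hp : 0 ≤ heatKernel d (2 * s) (x - w) := heatKernel_nonneg_s9 (by positivity) _
  have hq : 0 ≤ 2 ^ ((d : ℝ) / 2) * heatKernel d (4 * s) (x - w) :=
    mul_nonneg (by positivity) (heatKernel_nonneg_s9 (by positivity) _)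
  nlinarith [mul_le_mul_of_nonneg_left h2 h0, mul_le_mul_of_nonneg_left hh hq]

lemma abs_heatKernel_sub_heatKernel_mul_exp_le (ht : 0 < t) (hlam : 0 ≤ lam) {x y : ℝᵈ}
    (hxy : ‖x - y‖ ≤ √t) (w : ℝᵈ) :
    |heatKernel d t (x - w) - heatKernel d t (y - w)| * exp (lam * ‖w‖) ≤
      2 ^ d * (5 / 2 * (‖x - y‖ / √t)) * exp (lam ^ 2 * t) *
        (exp (lam * ‖x‖) * heatKernel d (4 * t) (x - w) +
          exp (lam * ‖y‖) * heatKernel d (4 * t) (y - w)) := by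
  set h := ‖x - y‖
  have hst : 0 < √t := sqrt_pos.2 ht
  have hdiff := abs_heatKernel_sub_heatKernel_le (d := d) ht (x - w) (y - w)
  rw [sub_sub_sub_cancel_right] at hdiff
  have hxw : ‖x - w‖ + ‖y - w‖ ≤ 2 * ‖x - w‖ + h := by
    linarith [norm_sub_le_norm_sub_add_norm_sub y x w, norm_sub_rev y x]
  have hyw : ‖x - w‖ + ‖y - w‖ ≤ 2 * ‖y - w‖ + h := by
    linarith [norm_sub_le_norm_sub_add_norm_sub x y w]
  have hx := two_norm_add_mul_heatKernel_sub_mul_exp_le ht hlam (norm_nonneg _) hxy x w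
  have hy := two_norm_add_mul_heatKernel_sub_mul_exp_le ht hlam (norm_nonneg _) hxy y w
  have hpx : 0 ≤ heatKernel d t (x - w) * exp (lam * ‖w‖) :=
    mul_nonneg (heatKernel_nonneg_s9 ht.le _) (exp_nonneg _)
  have hpy : 0 ≤ heatKernel d t (y - w) * exp (lam * ‖w‖) :=
    mul_nonneg (heatKernel_nonneg_s9 ht.le _) (exp_nonneg _)
  calc |heatKernel d t (x - w) - heatKernel d t (y - w)| * exp (lam * ‖w‖)
      ≤ h / (2 * t) * (‖x - w‖ + ‖y - w‖) * (heatKernel d t (x - w) + heatKernel d t (y - w)) *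
          exp (lam * ‖w‖) := by gcongr
    _ = h / (2 * t) * ((‖x - w‖ + ‖y - w‖) * (heatKernel d t (x - w) * exp (lam * ‖w‖)) +
          (‖x - w‖ + ‖y - w‖) * (heatKernel d t (y - w) * exp (lam * ‖w‖))) := by ring
    _ ≤ h / (2 * t) * ((2 * ‖x - w‖ + h) * (heatKernel d t (x - w) * exp (lam * ‖w‖)) +
          (2 * ‖y - w‖ + h) * (heatKernel d t (y - w) * exp (lam * ‖w‖))) := by gcongr
    _ ≤ h / (2 * t) *
          (2 ^ d * (5 * √t) *
              (exp (lam ^ 2 * t) * exp (lam * ‖x‖) * heatKernel d (4 * t) (x - w)) +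
            2 ^ d * (5 * √t) *
              (exp (lam ^ 2 * t) * exp (lam * ‖y‖) * heatKernel d (4 * t) (y - w))) := by
        gcongr
    _ = _ := by field_simp; rw [sq_sqrt ht.le]

lemma abs_heatKernel_sub_heatKernel_of_le_mul_exp_le (ht : 0 < t) (htt' : t ≤ t')
    (hlam : 0 ≤ lam) (y w : ℝᵈ) :
    |heatKernel d t (y - w) - heatKernel d t' (y - w)| * exp (lam * ‖w‖) ≤
      2 ^ d * ((t' - t) / t) * exp (lam * ‖y‖) *
        (d / 2 * exp (lam ^ 2 * t) * heatKernel d (4 * t) (y - w) +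
          4 * exp (lam ^ 2 * t') * heatKernel d (4 * t') (y - w)) := by
  have ht' : 0 < t' := ht.trans_le htt'
  have hS' : 0 ≤ (t' - t) / (2 * t * t') := div_nonneg (by linarith) (by positivity)
  calc |heatKernel d t (y - w) - heatKernel d t' (y - w)| * exp (lam * ‖w‖)
      ≤ (d / 2 * ((t' - t) / t) * heatKernel d t (y - w) +
          (t' - t) / (2 * t * t') * (‖y - w‖ ^ 2 * heatKernel d t' (y - w))) *
          exp (lam * ‖w‖) := by
        gcongr; exact abs_heatKernel_sub_heatKernel_le_of_le ht htt' _
    _ = d / 2 * ((t' - t) / t) * (heatKernel d t (y - w) * exp (lam * ‖w‖)) +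
          (t' - t) / (2 * t * t') *
            (‖y - w‖ ^ 2 * (heatKernel d t' (y - w) * exp (lam * ‖w‖))) := by
        ring
    _ ≤ d / 2 * ((t' - t) / t) *
          (2 ^ d * (exp (lam ^ 2 * t) * exp (lam * ‖y‖) * heatKernel d (4 * t) (y - w))) +
        (t' - t) / (2 * t * t') *
          (2 ^ d * (8 * t') *
            (exp (lam ^ 2 * t') * exp (lam * ‖y‖) * heatKernel d (4 * t') (y - w))) := by
        have hd : (0 : ℝ) ≤ d / 2 * ((t' - t) / t) := by positivity
        exact add_le_add
          (mul_le_mul_of_nonneg_left (heatKernel_sub_mul_exp_le_four_mul ht hlam y w) hd)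
          (mul_le_mul_of_nonneg_left (sq_norm_mul_heatKernel_sub_mul_exp_le ht' hlam y w) hS')
    _ = _ := by
        field_simp
        ring

lemma abs_heatKernel_sub_mul_exp_le (ht : 0 < t) (htt' : t ≤ t') (hlam : 0 ≤ lam)
    (x y w : ℝᵈ) :
    |heatKernel d t (x - w) - heatKernel d t' (y - w)| * exp (lam * ‖w‖) ≤
      2 ^ d * (exp (lam ^ 2 * t) * exp (lam * ‖x‖) * heatKernel d (4 * t) (x - w) +
        exp (lam ^ 2 * t') * exp (lam * ‖y‖) * heatKernel d (4 * t') (y - w)) := by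
  have ht' : 0 < t' := ht.trans_le htt'
  have habs : |heatKernel d t (x - w) - heatKernel d t' (y - w)| ≤
      heatKernel d t (x - w) + heatKernel d t' (y - w) :=
    abs_sub_le_iff.2 ⟨by linarith [heatKernel_nonneg_s9 ht'.le (d := d) (y - w)],
      by linarith [heatKernel_nonneg_s9 ht.le (d := d) (x - w)]⟩
  calc |heatKernel d t (x - w) - heatKernel d t' (y - w)| * exp (lam * ‖w‖)
      ≤ heatKernel d t (x - w) * exp (lam * ‖w‖) + heatKernel d t' (y - w) * exp (lam * ‖w‖) := by
        rw [← add_mul]; gcongr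
    _ ≤ _ := by
        rw [mul_add]
        exact add_le_add (heatKernel_sub_mul_exp_le_four_mul ht hlam x w)
          (heatKernel_sub_mul_exp_le_four_mul ht' hlam y w)

lemma integral_abs_heatKernel_sub_mul_exp_le (ht : 0 < t) (htt' : t ≤ t') (hlam : 0 ≤ lam)
    (x y : ℝᵈ) :
    ∫ w, |heatKernel d t (x - w) - heatKernel d t' (y - w)| * exp (lam * ‖w‖) ≤
      2 ^ d * exp (lam ^ 2 * t') * (exp (lam * ‖x‖) + exp (lam * ‖y‖)) := by
  have ht' : 0 < t' := ht.trans_le htt'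
  have := integrable_heatKernel_sub (d := d) (by positivity : 0 < 4 * t) x
  have := integrable_heatKernel_sub (d := d) (by positivity : 0 < 4 * t') y
  calc ∫ w, |heatKernel d t (x - w) - heatKernel d t' (y - w)| * exp (lam * ‖w‖)
      ≤ ∫ w, 2 ^ d * (exp (lam ^ 2 * t) * exp (lam * ‖x‖) * heatKernel d (4 * t) (x - w) +
          exp (lam ^ 2 * t') * exp (lam * ‖y‖) * heatKernel d (4 * t') (y - w)) :=
        integral_mono_of_nonneg (ae_of_all _ fun w ↦ by positivity) (by fun_prop)
          (ae_of_all _ (abs_heatKernel_sub_mul_exp_le ht htt' hlam x y))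
    _ = 2 ^ d * (exp (lam ^ 2 * t) * exp (lam * ‖x‖) + exp (lam ^ 2 * t') * exp (lam * ‖y‖)) :=
        integral_mul_heatKernel_sub_add (by positivity) (by positivity) x y _ _ _
    _ ≤ _ := by
        have : exp (lam ^ 2 * t) ≤ exp (lam ^ 2 * t') := by gcongr
        rw [mul_assoc, mul_add (exp _)]
        gcongr

lemma abs_heatKernel_sub_mul_exp_le_of_norm_sub_le_sqrt (ht : 0 < t) (htt' : t ≤ t')
    (hlam : 0 ≤ lam) {x y : ℝᵈ} (hxy : ‖x - y‖ ≤ √t) (w : ℝᵈ) :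
    |heatKernel d t (x - w) - heatKernel d t' (y - w)| * exp (lam * ‖w‖) ≤
      2 ^ d * (5 / 2 * (‖x - y‖ / √t)) * exp (lam ^ 2 * t) *
          (exp (lam * ‖x‖) * heatKernel d (4 * t) (x - w) +
            exp (lam * ‖y‖) * heatKernel d (4 * t) (y - w)) +
        2 ^ d * ((t' - t) / t) * exp (lam * ‖y‖) *
          (d / 2 * exp (lam ^ 2 * t) * heatKernel d (4 * t) (y - w) +
            4 * exp (lam ^ 2 * t') * heatKernel d (4 * t') (y - w)) :=
  calc |heatKernel d t (x - w) - heatKernel d t' (y - w)| * exp (lam * ‖w‖)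
      ≤ |heatKernel d t (x - w) - heatKernel d t (y - w)| * exp (lam * ‖w‖) +
          |heatKernel d t (y - w) - heatKernel d t' (y - w)| * exp (lam * ‖w‖) := by
        rw [← add_mul]; gcongr; exact abs_sub_le _ _ _
    _ ≤ _ := add_le_add (abs_heatKernel_sub_heatKernel_mul_exp_le ht hlam hxy w)
        (abs_heatKernel_sub_heatKernel_of_le_mul_exp_le ht htt' hlam y w)

lemma integral_abs_heatKernel_sub_mul_exp_le_of_norm_sub_le_sqrt (ht : 0 < t) (htt' : t ≤ t')
    (hlam : 0 ≤ lam) {x y : ℝᵈ} (hxy : ‖x - y‖ ≤ √t) :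
    ∫ w, |heatKernel d t (x - w) - heatKernel d t' (y - w)| * exp (lam * ‖w‖) ≤
      (d + 4) * 2 ^ d * exp (lam ^ 2 * t') * (exp (lam * ‖x‖) + exp (lam * ‖y‖)) *
        (‖x - y‖ / √t + (t' - t) / t) := by
  have ht' : 0 < t' := ht.trans_le htt'
  have := integrable_heatKernel_sub (d := d) (by positivity : 0 < 4 * t) x
  have := integrable_heatKernel_sub (d := d) (by positivity : 0 < 4 * t) y
  have := integrable_heatKernel_sub (d := d) (by positivity : 0 < 4 * t') y
  set A := 2 ^ d * (5 / 2 * (‖x - y‖ / √t)) * exp (lam ^ 2 * t)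
  set B := 2 ^ d * ((t' - t) / t) * exp (lam * ‖y‖)
  calc ∫ w, |heatKernel d t (x - w) - heatKernel d t' (y - w)| * exp (lam * ‖w‖)
      ≤ ∫ w, (A * (exp (lam * ‖x‖) * heatKernel d (4 * t) (x - w) +
            exp (lam * ‖y‖) * heatKernel d (4 * t) (y - w)) +
          B * (d / 2 * exp (lam ^ 2 * t) * heatKernel d (4 * t) (y - w) +
            4 * exp (lam ^ 2 * t') * heatKernel d (4 * t') (y - w))) :=
        integral_mono_of_nonneg (ae_of_all _ fun w ↦ by positivity) (by fun_prop)
          (ae_of_all _ (abs_heatKernel_sub_mul_exp_le_of_norm_sub_le_sqrt ht htt' hlam hxy))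
    _ = A * (exp (lam * ‖x‖) + exp (lam * ‖y‖)) +
          B * (d / 2 * exp (lam ^ 2 * t) + 4 * exp (lam ^ 2 * t')) := by
        rw [integral_add (by fun_prop) (by fun_prop),
          integral_mul_heatKernel_sub_add (by positivity) (by positivity),
          integral_mul_heatKernel_sub_add (by positivity) (by positivity)]
    _ ≤ _ := by
        have hd : (0 : ℝ) ≤ d := d.cast_nonneg
        have hA : A ≤ 2 ^ d * ((d + 4) * (‖x - y‖ / √t)) * exp (lam ^ 2 * t') := by
          unfold A; gcongr; linarith
        have hB : d / 2 * exp (lam ^ 2 * t) + 4 * exp (lam ^ 2 * t') ≤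
            (d + 4) * exp (lam ^ 2 * t') := by
          have hE : exp (lam ^ 2 * t) ≤ exp (lam ^ 2 * t') := by gcongr
          nlinarith [exp_pos (lam ^ 2 * t)]
        have hy : exp (lam * ‖y‖) ≤ exp (lam * ‖x‖) + exp (lam * ‖y‖) :=
          le_add_of_nonneg_left (exp_pos _).le
        calc _ ≤ 2 ^ d * ((d + 4) * (‖x - y‖ / √t)) * exp (lam ^ 2 * t') *
                (exp (lam * ‖x‖) + exp (lam * ‖y‖)) +
              2 ^ d * ((t' - t) / t) * (exp (lam * ‖x‖) + exp (lam * ‖y‖)) *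
                ((d + 4) * exp (lam ^ 2 * t')) := by
              unfold B; gcongr
          _ = _ := by ring

lemma integral_abs_heatKernel_sub_mul_exp_le_min (ht : 0 < t) (htt' : t ≤ t') (hlam : 0 ≤ lam)
    (x y : ℝᵈ) :
    ∫ w, |heatKernel d t (x - w) - heatKernel d t' (y - w)| * exp (lam * ‖w‖) ≤
      (d + 4) * 2 ^ d * exp (lam ^ 2 * t') * (exp (lam * ‖x‖) + exp (lam * ‖y‖)) *
        min 1 (‖x - y‖ / √t + (t' - t) / t) := by
  have hM : 2 ^ d * exp (lam ^ 2 * t') * (exp (lam * ‖x‖) + exp (lam * ‖y‖)) ≤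
      (d + 4) * 2 ^ d * exp (lam ^ 2 * t') * (exp (lam * ‖x‖) + exp (lam * ‖y‖)) := by
    rw [mul_assoc ((d : ℝ) + 4), mul_assoc ((d : ℝ) + 4)]
    exact le_mul_of_one_le_left (by positivity) (by linarith [(by positivity : (0 : ℝ) ≤ d)])
  have hfar := (integral_abs_heatKernel_sub_mul_exp_le ht htt' hlam x y).trans hM
  have hS : 0 ≤ (t' - t) / t := div_nonneg (by linarith) ht.le
  by_cases hxy : ‖x - y‖ ≤ √t
  · rw [mul_min_of_nonneg _ _ (by positivity), mul_one]
    exact le_min hfar (integral_abs_heatKernel_sub_mul_exp_le_of_norm_sub_le_sqrt ht htt' hlam hxy)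
  · have : 1 ≤ ‖x - y‖ / √t + (t' - t) / t := by
      rw [not_le, ← one_lt_div (sqrt_pos.2 ht)] at hxy
      linarith
    rwa [min_eq_left this, mul_one]

end HeatKernel

lemma min_one_add_le_rpow_add {a b β : ℝ} (ha : 0 ≤ a) (hb : 0 ≤ b) (hβ0 : 0 ≤ β) (hβ1 : β ≤ 1) :
    min 1 (a + b) ≤ a ^ β + b ^ β := by
  refine le_trans ?_ (rpow_add_le_add_rpow ha hb hβ0 hβ1)
  rcases le_total (a + b) 1 with h | h
  · exact (min_le_right _ _).trans (self_le_rpow_of_le_one (by positivity) h hβ1)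
  · exact (min_le_left _ _).trans (one_le_rpow h hβ0)

theorem heatKernel_space_time_difference_L1_bound_general
    (d : ℕ) :
    ∃ c : ℝ, 0 < c ∧ ∀ (β : ℝ), 0 < β → β ≤ 1 → ∀ (lam : ℝ), 0 ≤ lam →
      ∀ (x y : EuclideanSpace ℝ (Fin d)) (t t' : ℝ), 0 < t → t ≤ t' →
      (∫ w : EuclideanSpace ℝ (Fin d),
          |heatKernel d t (x - w) - heatKernel d t' (y - w)| * Real.exp (lam * ‖w‖))
        ≤ c * Real.exp (2 * lam ^ 2 * t') * (Real.exp (lam * ‖x‖) + Real.exp (lam * ‖y‖)) *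
            Real.exp (2 * β * lam * ‖x - y‖) *
            (t ^ (-β / 2) * ‖x - y‖ ^ β + t ^ (-β) * (t' - t) ^ β) := by
  refine ⟨(d + 4) * 2 ^ d, by positivity, fun β hβ0 hβ1 lam hlam x y t t' ht htt' ↦ ?_⟩
  have hspace : (‖x - y‖ / √t) ^ β = t ^ (-β / 2) * ‖x - y‖ ^ β := by
    rw [div_rpow (norm_nonneg _) (sqrt_nonneg t), sqrt_eq_rpow, ← rpow_mul ht.le, div_eq_inv_mul,
      ← rpow_neg ht.le]
    ring_nf
  have htime : ((t' - t) / t) ^ β = t ^ (-β) * (t' - t) ^ β := by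
    rw [div_rpow (by linarith) ht.le, div_eq_inv_mul, ← rpow_neg ht.le]
  have hmin := min_one_add_le_rpow_add (div_nonneg (norm_nonneg (x - y)) (sqrt_nonneg t))
    (div_nonneg (by linarith : 0 ≤ t' - t) ht.le) hβ0.le hβ1
  rw [hspace, htime] at hmin
  calc _ ≤ _ := integral_abs_heatKernel_sub_mul_exp_le_min ht htt' hlam x y
    _ ≤ (d + 4) * 2 ^ d * exp (2 * lam ^ 2 * t') * (exp (lam * ‖x‖) + exp (lam * ‖y‖)) * 1 *
          (t ^ (-β / 2) * ‖x - y‖ ^ β + t ^ (-β) * (t' - t) ^ β) := by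
        rw [mul_one]
        gcongr
        · linarith
        · linarith [sq_nonneg lam]
    _ ≤ _ := by
        gcongr
        exact one_le_exp (by positivity)

/-- There is `c = c(d) > 0` such that for every `0 < β ≤ 1`, `λ' ≥ 0`,
`x, y ∈ ℝ^d` and `0 < t ≤ t'`,
`∫ |p_t(x−w) − p_{t'}(y−w)| e^{λ'|w|} dw
  ≤ c e^{2λ'²t'} (e^{λ'|x|}+e^{λ'|y|}) e^{2βλ'|x−y|} (t^{-β/2}|x−y|^β + t^{-β}(t'−t)^β)`. -/
theorem heatKernel_space_time_difference_L1_bound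
    (d : ℕ) (hd : 1 ≤ d) :
    ∃ c : ℝ, 0 < c ∧ ∀ (β : ℝ), 0 < β → β ≤ 1 → ∀ (lam : ℝ), 0 ≤ lam →
      ∀ (x y : EuclideanSpace ℝ (Fin d)) (t t' : ℝ), 0 < t → t ≤ t' →
      (∫ w : EuclideanSpace ℝ (Fin d),
          |heatKernel d t (x - w) - heatKernel d t' (y - w)| * Real.exp (lam * ‖w‖))
        ≤ c * Real.exp (2 * lam ^ 2 * t') * (Real.exp (lam * ‖x‖) + Real.exp (lam * ‖y‖)) *
            Real.exp (2 * β * lam * ‖x - y‖) *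
            (t ^ (-β / 2) * ‖x - y‖ ^ β + t ^ (-β) * (t' - t) ^ β) :=
  heatKernel_space_time_difference_L1_bound_general d
end

section
/- Let d ≥ 1. There exists a constant c = c(d) > 0 such that for every λ' ≥ 0, every t > 0 and all x, y ∈ ℝ^d, ∫_{ℝ^d} |p_t(x−w) − p_t(y−w)| e^{λ'|w|} dw ≤ c e^{(λ')² t} e^{λ'|x| + 2λ'|x−y|} t^{-1/2} |x−y|. -/
open Real MeasureTheory

/-!
If `‖x - y‖² ≤ t`, the mean value theorem bounds `|p_t(x - w) - p_t(y - w)|` by `‖x - y‖` times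
the gradient `p_t(z) ‖z‖ / t` somewhere on the segment; `s e^{-s²/2t} ≤ 2 √t e^{-3s²/8t}` and
`‖z‖² ≥ (3/4) ‖x - w‖² - 3 ‖x - y‖²` turn this into `t^{-1/2} ‖x - y‖` times a Gaussian in `x - w`
of rate `9/(32t)`. If `‖x - y‖² > t`, bound the difference by the sum and use
`1 ≤ t^{-1/2} ‖x - y‖`. In both cases the weight is absorbed by `λ‖w‖ ≤ λ‖ξ‖ + λ‖ξ - w‖` and
completing the square, `-(1/4t) r² + λ r ≤ λ² t`, which is possible because both Gaussian rates
exceed `1/(4t)`.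
-/

theorem rpow_neg_mul_mul_rpow {c : ℝ} (hc : 0 < c) {k : ℝ} (hk : 0 ≤ k) (r : ℝ) :
    c ^ (-r) * (k * c) ^ r = k ^ r := by
  rw [mul_rpow hk hc.le, rpow_neg hc.le, mul_left_comm, inv_mul_cancel₀ (by positivity), mul_one]

theorem one_le_rpow_neg_one_div_two_mul {t δ : ℝ} (ht : 0 < t) (hδ : 0 ≤ δ) (h : t ≤ δ ^ 2) :
    1 ≤ t ^ (-(1 : ℝ) / 2) * δ := by
  rw [neg_div, rpow_neg ht.le, ← sqrt_eq_rpow, inv_mul_eq_div, one_le_div (sqrt_pos.2 ht)]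
  simpa [sqrt_sq hδ] using sqrt_le_sqrt h

theorem le_two_mul_sqrt_mul_exp_sq_div {t : ℝ} (ht : 0 < t) (s : ℝ) :
    s ≤ 2 * √t * exp (s ^ 2 / (8 * t)) := by
  have hst : 0 < √t := sqrt_pos.2 ht
  have hlin : s ≤ 2 * √t * (s ^ 2 / (8 * t) + 1) := by
    rw [show s ^ 2 / (8 * t) = s ^ 2 / (8 * √t ^ 2) by rw [sq_sqrt ht.le]]
    field_simp
    nlinarith [sq_nonneg (s - 2 * √t)]
  calc s ≤ 2 * √t * (s ^ 2 / (8 * t) + 1) := hlin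
    _ ≤ 2 * √t * exp (s ^ 2 / (8 * t)) := by gcongr; exact add_one_le_exp _

section Gaussian

variable {V : Type*} [NormedAddCommGroup V] [InnerProductSpace ℝ V] [FiniteDimensional ℝ V]
  [MeasurableSpace V] [BorelSpace V]

theorem integrable_exp_neg_mul_sq_norm {b : ℝ} (hb : 0 < b) :
    Integrable (fun v : V ↦ exp (-b * ‖v‖ ^ 2)) :=
  Integrable.of_integral_ne_zero <| by
    rw [GaussianFourier.integral_rexp_neg_mul_sq_norm hb]; positivity

theorem exp_neg_mul_sq_norm_sub_mul_exp_le {E : Type*} [SeminormedAddCommGroup E]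
    {a b lam : ℝ} (hab : a < b) (hlam : 0 ≤ lam) (ξ w : E) :
    exp (-b * ‖ξ - w‖ ^ 2) * exp (lam * ‖w‖)
      ≤ exp (lam ^ 2 / (4 * (b - a))) * exp (lam * ‖ξ‖) * exp (-a * ‖ξ - w‖ ^ 2) := by
  have hw : ‖w‖ ≤ ‖ξ‖ + ‖ξ - w‖ := by simpa using norm_sub_le ξ (ξ - w)
  have hsq : -(b - a) * ‖ξ - w‖ ^ 2 + lam * ‖ξ - w‖ ≤ lam ^ 2 / (4 * (b - a)) := by
    have hba : 0 < b - a := sub_pos.2 hab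
    rw [le_div_iff₀ (by positivity)]
    nlinarith [sq_nonneg (2 * (b - a) * ‖ξ - w‖ - lam)]
  simp only [← exp_add, exp_le_exp]
  nlinarith [mul_le_mul_of_nonneg_left hw hlam]

theorem integrable_exp_neg_mul_sq_norm_sub_mul_exp {b lam : ℝ} (hb : 0 < b) (hlam : 0 ≤ lam)
    (ξ : V) : Integrable (fun w : V ↦ exp (-b * ‖ξ - w‖ ^ 2) * exp (lam * ‖w‖)) := by
  have hdom := ((integrable_exp_neg_mul_sq_norm (half_pos hb)).comp_sub_left ξ).const_mul
    (exp (lam ^ 2 / (4 * (b - b / 2))) * exp (lam * ‖ξ‖))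
  refine hdom.mono' (by fun_prop) (.of_forall fun w ↦ ?_)
  rw [norm_of_nonneg (by positivity)]
  exact exp_neg_mul_sq_norm_sub_mul_exp_le (half_lt_self hb) hlam ξ w

theorem integral_exp_neg_mul_sq_norm_sub_mul_exp_le {a b lam : ℝ} (ha : 0 < a) (hab : a < b)
    (hlam : 0 ≤ lam) (ξ : V) :
    ∫ w : V, exp (-b * ‖ξ - w‖ ^ 2) * exp (lam * ‖w‖)
      ≤ exp (lam ^ 2 / (4 * (b - a))) * exp (lam * ‖ξ‖) *
          (π / a) ^ (Module.finrank ℝ V / 2 : ℝ) := by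
  calc ∫ w : V, exp (-b * ‖ξ - w‖ ^ 2) * exp (lam * ‖w‖)
      ≤ ∫ w : V, exp (lam ^ 2 / (4 * (b - a))) * exp (lam * ‖ξ‖) * exp (-a * ‖ξ - w‖ ^ 2) :=
        integral_mono_of_nonneg (.of_forall fun w ↦ by positivity)
          (((integrable_exp_neg_mul_sq_norm ha).comp_sub_left ξ).const_mul _)
          (.of_forall (exp_neg_mul_sq_norm_sub_mul_exp_le hab hlam ξ))
    _ = _ := by
      rw [integral_const_mul, integral_sub_left_eq_self (fun v : V ↦ exp (-a * ‖v‖ ^ 2)),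
        GaussianFourier.integral_rexp_neg_mul_sq_norm ha]

end Gaussian

namespace heatKernel

variable {d : ℕ} {t : ℝ}

local notation "E" => EuclideanSpace ℝ (Fin d)

theorem nonneg (ht : 0 ≤ t) (z : E) : 0 ≤ heatKernel d t z := by
  unfold heatKernel; positivity

theorem eq_mul_exp_neg_mul_sq_norm (z : E) :
    heatKernel d t z = (2 * π * t) ^ (-(d : ℝ) / 2) * exp (-(1 / (2 * t)) * ‖z‖ ^ 2) := by
  rw [heatKernel]; ring_nf

theorem hasFDerivAt (z : E) :
    HasFDerivAt (heatKernel d t) (-(heatKernel d t z / t) • innerSL ℝ z) z := by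
  have hsq := ((hasStrictFDerivAt_norm_sq z).hasFDerivAt.const_mul (-(1 / (2 * t)))).exp.const_mul
    ((2 * π * t) ^ (-(d : ℝ) / 2))
  rw [show heatKernel d t = _ from funext eq_mul_exp_neg_mul_sq_norm]
  refine hsq.congr_fderiv ?_
  rw [← Nat.cast_smul_eq_nsmul ℝ, smul_smul, smul_smul, smul_smul]
  congr 1
  push_cast
  field_simp

theorem norm_mul_div_le (ht : 0 < t) (z : E) :
    heatKernel d t z * ‖z‖ / t
      ≤ 2 * t ^ (-(1 : ℝ) / 2) * (2 * π * t) ^ (-(d : ℝ) / 2) * exp (-(3 / (8 * t)) * ‖z‖ ^ 2) := by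
  have hrpow : t ^ (-(1 : ℝ) / 2) = √t / t := by
    rw [show (-(1 : ℝ) / 2) = 1 / 2 - 1 by norm_num, rpow_sub_one ht.ne', sqrt_eq_rpow]
  have hexp : -(3 / (8 * t)) * ‖z‖ ^ 2 = -‖z‖ ^ 2 / (2 * t) + ‖z‖ ^ 2 / (8 * t) := by
    field_simp; ring
  calc heatKernel d t z * ‖z‖ / t
      ≤ heatKernel d t z * (2 * √t * exp (‖z‖ ^ 2 / (8 * t))) / t := by
        gcongr
        · exact nonneg ht.le z
        · exact le_two_mul_sqrt_mul_exp_sq_div ht ‖z‖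
    _ = _ := by rw [hrpow, hexp, exp_add, heatKernel]; ring

theorem abs_sub_le (ht : 0 < t) (a b : E) :
    |heatKernel d t a - heatKernel d t b|
      ≤ 2 * exp (9 * ‖a - b‖ ^ 2 / (8 * t)) * t ^ (-(1 : ℝ) / 2) * (2 * π * t) ^ (-(d : ℝ) / 2) *
          exp (-(9 / (32 * t)) * ‖a‖ ^ 2) * ‖a - b‖ := by
  refine (convex_segment b a).norm_image_sub_le_of_norm_hasFDerivWithin_le
    (fun z _ ↦ (hasFDerivAt z).hasFDerivWithinAt) (fun z hz ↦ ?_)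
    (left_mem_segment ℝ b a) (right_mem_segment ℝ b a)
  have hz_near : ‖a‖ ≤ ‖z‖ + ‖a - b‖ := by
    have := norm_sub_le_of_mem_segment (segment_symm ℝ b a ▸ hz)
    linarith [norm_le_norm_add_norm_sub' a z, norm_sub_rev a z, norm_sub_rev a b]
  have hexp : exp (-(3 / (8 * t)) * ‖z‖ ^ 2)
      ≤ exp (9 * ‖a - b‖ ^ 2 / (8 * t)) * exp (-(9 / (32 * t)) * ‖a‖ ^ 2) := by
    have hyoung : 9 * ‖a‖ ^ 2 ≤ 12 * ‖z‖ ^ 2 + 36 * ‖a - b‖ ^ 2 := by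
      nlinarith [sq_nonneg (‖z‖ - 3 * ‖a - b‖), mul_self_le_mul_self (norm_nonneg a) hz_near]
    have hgap : 9 * ‖a - b‖ ^ 2 / (8 * t) + -(9 / (32 * t)) * ‖a‖ ^ 2 - -(3 / (8 * t)) * ‖z‖ ^ 2
        = (12 * ‖z‖ ^ 2 + 36 * ‖a - b‖ ^ 2 - 9 * ‖a‖ ^ 2) / (32 * t) := by
      field_simp; ring
    rw [← exp_add, exp_le_exp]
    linarith [div_nonneg (sub_nonneg.2 hyoung) (by positivity : (0 : ℝ) ≤ 32 * t)]
  rw [norm_smul, innerSL_apply_norm, norm_neg, norm_div, norm_of_nonneg (nonneg ht.le z),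
    norm_of_nonneg ht.le, div_mul_eq_mul_div]
  calc heatKernel d t z * ‖z‖ / t
      ≤ 2 * t ^ (-(1 : ℝ) / 2) * (2 * π * t) ^ (-(d : ℝ) / 2) * exp (-(3 / (8 * t)) * ‖z‖ ^ 2) :=
        norm_mul_div_le ht z
    _ ≤ _ := by
      grw [hexp]
      exact le_of_eq (by ring)

theorem integrable_sub_mul_exp (ht : 0 < t) {lam : ℝ} (hlam : 0 ≤ lam) (ξ : E) :
    Integrable (fun w : E ↦ heatKernel d t (ξ - w) * exp (lam * ‖w‖)) := by
  simp_rw [eq_mul_exp_neg_mul_sq_norm, mul_assoc ((2 * π * t) ^ (-(d : ℝ) / 2))]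
  exact (integrable_exp_neg_mul_sq_norm_sub_mul_exp (by positivity) hlam ξ).const_mul _

theorem integral_sub_mul_exp_le (ht : 0 < t) {lam : ℝ} (hlam : 0 ≤ lam) (ξ : E) :
    ∫ w : E, heatKernel d t (ξ - w) * exp (lam * ‖w‖)
      ≤ 2 ^ ((d : ℝ) / 2) * exp (lam ^ 2 * t) * exp (lam * ‖ξ‖) := by
  simp_rw [eq_mul_exp_neg_mul_sq_norm, mul_assoc ((2 * π * t) ^ (-(d : ℝ) / 2))]
  rw [integral_const_mul]
  have hgauss := integral_exp_neg_mul_sq_norm_sub_mul_exp_le (V := E)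
    (a := 1 / (4 * t)) (b := 1 / (2 * t)) (by positivity) (by gcongr; linarith) hlam ξ
  have hrate : lam ^ 2 / (4 * (1 / (2 * t) - 1 / (4 * t))) = lam ^ 2 * t := by field_simp; ring
  have hvol : π / (1 / (4 * t)) = 2 * (2 * π * t) := by field_simp; ring
  rw [finrank_euclideanSpace_fin, hrate, hvol] at hgauss
  calc (2 * π * t) ^ (-(d : ℝ) / 2) * ∫ w : E, exp (-(1 / (2 * t)) * ‖ξ - w‖ ^ 2) * exp (lam * ‖w‖)
      ≤ (2 * π * t) ^ (-(d : ℝ) / 2) *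
          (exp (lam ^ 2 * t) * exp (lam * ‖ξ‖) * (2 * (2 * π * t)) ^ ((d : ℝ) / 2)) := by
        gcongr
    _ = exp (lam ^ 2 * t) * exp (lam * ‖ξ‖) *
          ((2 * π * t) ^ (-((d : ℝ) / 2)) * (2 * (2 * π * t)) ^ ((d : ℝ) / 2)) := by
        rw [neg_div]; ring
    _ = _ := by rw [rpow_neg_mul_mul_rpow (by positivity) zero_le_two]; ring

theorem integral_abs_sub_sub_mul_exp_le (ht : 0 < t) {lam : ℝ} (hlam : 0 ≤ lam) (x y : E) :
    ∫ w : E, |heatKernel d t (x - w) - heatKernel d t (y - w)| * exp (lam * ‖w‖)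
      ≤ 2 ^ ((d : ℝ) / 2) * exp (lam ^ 2 * t) * (exp (lam * ‖x‖) + exp (lam * ‖y‖)) := by
  calc ∫ w : E, |heatKernel d t (x - w) - heatKernel d t (y - w)| * exp (lam * ‖w‖)
      ≤ ∫ w : E, (heatKernel d t (x - w) * exp (lam * ‖w‖) +
          heatKernel d t (y - w) * exp (lam * ‖w‖)) := by
        refine integral_mono_of_nonneg (.of_forall fun w ↦ by positivity)
          ((integrable_sub_mul_exp ht hlam x).add (integrable_sub_mul_exp ht hlam y))
          (.of_forall fun w ↦ ?_)
        simp only [← add_mul]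
        gcongr
        simpa only [abs_of_nonneg (nonneg ht.le _)] using
          abs_sub (heatKernel d t (x - w)) (heatKernel d t (y - w))
    _ ≤ _ := by
      rw [integral_add (integrable_sub_mul_exp ht hlam x) (integrable_sub_mul_exp ht hlam y)]
      linarith [integral_sub_mul_exp_le ht hlam x, integral_sub_mul_exp_le ht hlam y]

theorem integral_abs_sub_sub_mul_exp_le_of_sq_le (ht : 0 < t) {lam : ℝ} (hlam : 0 ≤ lam)
    {x y : E} (hxy : ‖x - y‖ ^ 2 ≤ t) :
    ∫ w : E, |heatKernel d t (x - w) - heatKernel d t (y - w)| * exp (lam * ‖w‖)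
      ≤ 2 * exp (9 / 8) * 16 ^ ((d : ℝ) / 2) * exp (lam ^ 2 * t) * exp (lam * ‖x‖) *
          t ^ (-(1 : ℝ) / 2) * ‖x - y‖ := by
  set K := 2 * exp (9 / 8) * t ^ (-(1 : ℝ) / 2) * (2 * π * t) ^ (-(d : ℝ) / 2) * ‖x - y‖
  have hpointwise (w : E) : |heatKernel d t (x - w) - heatKernel d t (y - w)| * exp (lam * ‖w‖)
      ≤ K * (exp (-(9 / (32 * t)) * ‖x - w‖ ^ 2) * exp (lam * ‖w‖)) := by
    have hdiff := abs_sub_le ht (x - w) (y - w)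
    rw [sub_sub_sub_cancel_right] at hdiff
    have hclose : exp (9 * ‖x - y‖ ^ 2 / (8 * t)) ≤ exp (9 / 8) := by
      rw [exp_le_exp, div_le_iff₀ (by positivity)]
      linarith
    grw [hdiff, hclose]
    exact le_of_eq (by ring)
  have hgauss := integral_exp_neg_mul_sq_norm_sub_mul_exp_le (V := E)
    (a := 1 / (32 * t)) (b := 9 / (32 * t)) (by positivity) (by gcongr; norm_num) hlam x
  have hrate : lam ^ 2 / (4 * (9 / (32 * t) - 1 / (32 * t))) = lam ^ 2 * t := by field_simp; ring
  have hvol : π / (1 / (32 * t)) = 16 * (2 * π * t) := by field_simp; ring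
  rw [finrank_euclideanSpace_fin, hrate, hvol] at hgauss
  calc ∫ w : E, |heatKernel d t (x - w) - heatKernel d t (y - w)| * exp (lam * ‖w‖)
      ≤ ∫ w : E, K * (exp (-(9 / (32 * t)) * ‖x - w‖ ^ 2) * exp (lam * ‖w‖)) :=
        integral_mono_of_nonneg (.of_forall fun w ↦ by positivity)
          ((integrable_exp_neg_mul_sq_norm_sub_mul_exp (by positivity) hlam x).const_mul K)
          (.of_forall hpointwise)
    _ ≤ K * (exp (lam ^ 2 * t) * exp (lam * ‖x‖) * (16 * (2 * π * t)) ^ ((d : ℝ) / 2)) := by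
        rw [integral_const_mul]
        gcongr
    _ = 2 * exp (9 / 8) * exp (lam ^ 2 * t) * exp (lam * ‖x‖) * t ^ (-(1 : ℝ) / 2) * ‖x - y‖ *
          ((2 * π * t) ^ (-((d : ℝ) / 2)) * (16 * (2 * π * t)) ^ ((d : ℝ) / 2)) := by
        simp only [K, neg_div]; ring
    _ = _ := by rw [rpow_neg_mul_mul_rpow (by positivity) (by norm_num)]; ring

end heatKernel

theorem heatKernel_space_difference_L1_bound_general
    (d : ℕ) :
    ∃ c : ℝ, 0 < c ∧ ∀ (lam : ℝ), 0 ≤ lam → ∀ (t : ℝ), 0 < t →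
      ∀ (x y : EuclideanSpace ℝ (Fin d)),
      (∫ w : EuclideanSpace ℝ (Fin d),
          |heatKernel d t (x - w) - heatKernel d t (y - w)| * Real.exp (lam * ‖w‖))
        ≤ c * Real.exp (lam ^ 2 * t) * Real.exp (lam * ‖x‖ + 2 * lam * ‖x - y‖) *
            t ^ (-(1 : ℝ) / 2) * ‖x - y‖ := by
  refine ⟨2 * exp (9 / 8) * 16 ^ ((d : ℝ) / 2), by positivity, fun lam hlam t ht x y ↦ ?_⟩
  have hx : exp (lam * ‖x‖) ≤ exp (lam * ‖x‖ + 2 * lam * ‖x - y‖) :=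
    exp_le_exp.2 (le_add_of_nonneg_right (by positivity))
  rcases le_or_gt (‖x - y‖ ^ 2) t with hclose | hfar
  · grw [heatKernel.integral_abs_sub_sub_mul_exp_le_of_sq_le ht hlam hclose, hx]
  have hy : exp (lam * ‖y‖) ≤ exp (lam * ‖x‖ + 2 * lam * ‖x - y‖) := by
    have hyx : ‖y‖ ≤ ‖x‖ + ‖x - y‖ := by simpa [norm_sub_rev] using norm_le_norm_add_norm_sub' y x
    rw [exp_le_exp]
    nlinarith [mul_le_mul_of_nonneg_left hyx hlam, mul_nonneg hlam (norm_nonneg (x - y))]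
  have hconst : 2 * 2 ^ ((d : ℝ) / 2) ≤ 2 * exp (9 / 8) * 16 ^ ((d : ℝ) / 2) := by
    have h16 : (2 : ℝ) ^ ((d : ℝ) / 2) ≤ 16 ^ ((d : ℝ) / 2) :=
      rpow_le_rpow (by norm_num) (by norm_num) (by positivity)
    have hexp := one_le_exp (by norm_num : (0 : ℝ) ≤ 9 / 8)
    nlinarith [mul_le_mul hexp h16 (by positivity) (by positivity)]
  calc _ ≤ 2 ^ ((d : ℝ) / 2) * exp (lam ^ 2 * t) * (exp (lam * ‖x‖) + exp (lam * ‖y‖)) :=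
        heatKernel.integral_abs_sub_sub_mul_exp_le ht hlam x y
    _ ≤ 2 * exp (9 / 8) * 16 ^ ((d : ℝ) / 2) * exp (lam ^ 2 * t) *
          exp (lam * ‖x‖ + 2 * lam * ‖x - y‖) * 1 := by
        grw [hx, hy, ← hconst]; exact le_of_eq (by ring)
    _ ≤ _ := by
        rw [mul_assoc _ (t ^ _)]
        gcongr
        exact one_le_rpow_neg_one_div_two_mul ht (norm_nonneg _) hfar.le

/-- There is `c = c(d) > 0` such that for every `λ' ≥ 0`, `t > 0` and
`x, y ∈ ℝ^d`,
`∫ |p_t(x−w) − p_t(y−w)| e^{λ'|w|} dw ≤ c e^{λ'²t} e^{λ'|x| + 2λ'|x−y|} t^{-1/2} |x−y|`. -/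
theorem heatKernel_space_difference_L1_bound
    (d : ℕ) (hd : 1 ≤ d) :
    ∃ c : ℝ, 0 < c ∧ ∀ (lam : ℝ), 0 ≤ lam → ∀ (t : ℝ), 0 < t →
      ∀ (x y : EuclideanSpace ℝ (Fin d)),
      (∫ w : EuclideanSpace ℝ (Fin d),
          |heatKernel d t (x - w) - heatKernel d t (y - w)| * Real.exp (lam * ‖w‖))
        ≤ c * Real.exp (lam ^ 2 * t) * Real.exp (lam * ‖x‖ + 2 * lam * ‖x - y‖) *
            t ^ (-(1 : ℝ) / 2) * ‖x - y‖ :=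
  heatKernel_space_difference_L1_bound_general d
end

section
/- Let φ, ψ : ℝ → ℝ be continuous functions with compact support. Then lim_{α→1⁻} ((1−α)/2) ∫_ℝ ∫_ℝ φ(x) |x−y|^{-α} ψ(y) dx dy = ∫_ℝ φ(x) ψ(x) dx; that is, as α approaches 1 from below, the renormalized Riesz kernels ((1−α)/2)|x−y|^{-α} on ℝ act as an approximate identity, so the corresponding colored-noise covariance functional converges to the white-noise covariance. -/
/-!
Substituting `y = x - t` and applying Fubini turns the double integral into
`∫ |t|^(-α) g(t) dt`, where the cross-correlation `g(t) = ∫ φ(x) ψ(x - t) dx` is continuous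
with compact support and `g(0) = ∫ φ ψ`. On each half-line, the substitution `t = u ^ p` with
`p = (1 - α)⁻¹` gives `(1 - α) ∫₀^∞ t^(-α) g(t) dt = ∫₀^∞ g(u ^ p) du`. As `p → ∞`, `u ^ p`
tends to `0` for `u < 1` and to `∞` for `u > 1`, so by dominated convergence the integral
tends to `g(0)`.
-/

open Real Filter MeasureTheory Set Topology
open scoped Convolution

noncomputable def crossCorrelation (φ ψ : ℝ → ℝ) (t : ℝ) : ℝ :=
  ∫ x, φ x * ψ (x - t)

section CrossCorrelation

variable {φ ψ : ℝ → ℝ}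

lemma crossCorrelation_eq_convolution (φ ψ : ℝ → ℝ) :
    crossCorrelation φ ψ = φ ⋆[ContinuousLinearMap.mul ℝ ℝ] fun u => ψ (-u) := by
  funext t
  simp [crossCorrelation, convolution_def]

lemma crossCorrelation_zero : crossCorrelation φ ψ 0 = ∫ x, φ x * ψ x := by
  simp [crossCorrelation]

lemma MeasureTheory.LocallyIntegrable.continuous_crossCorrelation (hφ : LocallyIntegrable φ)
    (hψ : Continuous ψ) (hψs : HasCompactSupport ψ) : Continuous (crossCorrelation φ ψ) := by
  rw [crossCorrelation_eq_convolution]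
  exact (hψs.comp_homeomorph (Homeomorph.neg ℝ)).continuous_convolution_right _ hφ
    (hψ.comp continuous_neg)

lemma HasCompactSupport.crossCorrelation (hφs : HasCompactSupport φ)
    (hψs : HasCompactSupport ψ) : HasCompactSupport (crossCorrelation φ ψ) := by
  rw [crossCorrelation_eq_convolution]
  exact hφs.convolution _ (hψs.comp_homeomorph (Homeomorph.neg ℝ))

end CrossCorrelation

lemma rpow_sub_one_mul_rpow_rpow_neg {u p α : ℝ} (hu : 0 < u) (hp : p * (1 - α) = 1) :
    u ^ (p - 1) * (u ^ p) ^ (-α) = 1 := by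
  rw [← rpow_mul hu.le, ← rpow_add hu]
  convert rpow_zero u using 2
  linarith

lemma integral_Ioi_rpow_neg_mul_eq_integral_comp_rpow (g : ℝ → ℝ) {α : ℝ} (hα : α < 1) :
    ∫ t in Ioi 0, t ^ (-α) * g t = (1 - α)⁻¹ * ∫ u in Ioi 0, g (u ^ (1 - α)⁻¹) := by
  have hp : 0 < (1 - α)⁻¹ := inv_pos.2 (sub_pos.2 hα)
  rw [← integral_comp_rpow_Ioi_of_pos hp, ← integral_const_mul]
  refine setIntegral_congr_fun measurableSet_Ioi fun u hu => ?_
  have := rpow_sub_one_mul_rpow_rpow_neg hu (inv_mul_cancel₀ (sub_pos.2 hα).ne')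
  simp only [smul_eq_mul]
  linear_combination (1 - α)⁻¹ * g (u ^ (1 - α)⁻¹) * this

section CompactSupport

variable {g : ℝ → ℝ}

lemma HasCompactSupport.exists_integrableOn_bound_comp_rpow (hg : Continuous g)
    (hgs : HasCompactSupport g) :
    ∃ b : ℝ → ℝ, IntegrableOn b (Ioi 0) ∧
      ∀ p ≥ (1 : ℝ), ∀ u ∈ Ioi (0 : ℝ), ‖g (u ^ p)‖ ≤ b u := by
  obtain ⟨C, hC⟩ := hgs.exists_bound_of_continuous hg
  obtain ⟨R, -, hR⟩ := hgs.exists_pos_le_norm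
  refine ⟨(Ioc 0 (max R 1)).indicator fun _ => C, ?_, fun p hp u hu => ?_⟩
  · exact ((integrable_indicator_iff measurableSet_Ioc).2
      (integrableOn_const measure_Ioc_lt_top.ne)).integrableOn
  by_cases huR : u ≤ max R 1
  · simpa [indicator_of_mem (show u ∈ Ioc 0 (max R 1) from ⟨hu, huR⟩)] using hC (u ^ p)
  · have hu1 : 1 ≤ u := (le_max_right _ _).trans (not_le.1 huR).le
    have : R ≤ ‖u ^ p‖ := by
      calc R ≤ u := (le_max_left _ _).trans (not_le.1 huR).le
        _ = u ^ (1 : ℝ) := (rpow_one u).symm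
        _ ≤ u ^ p := rpow_le_rpow_of_exponent_le hu1 hp
        _ ≤ ‖u ^ p‖ := le_norm_self _
    rw [hR _ this, norm_zero,
      indicator_of_notMem (show u ∉ Ioc 0 (max R 1) from fun h => huR h.2)]

lemma HasCompactSupport.tendsto_setIntegral_Ioi_comp_rpow_atTop (hg : Continuous g)
    (hgs : HasCompactSupport g) :
    Tendsto (fun p : ℝ => ∫ u in Ioi 0, g (u ^ p)) atTop (𝓝 (g 0)) := by
  obtain ⟨b, hb, hgb⟩ := hgs.exists_integrableOn_bound_comp_rpow hg
  have hlim : ∫ u in Ioi (0 : ℝ), (Iio 1).indicator (fun _ => g 0) u = g 0 := by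
    rw [setIntegral_indicator measurableSet_Iio, Ioi_inter_Iio, setIntegral_const]
    simp
  rw [← hlim]
  refine tendsto_integral_filter_of_dominated_convergence b
    (Eventually.of_forall fun p =>
      (hg.measurable.comp (measurable_id.pow_const p)).aestronglyMeasurable)
    ((eventually_ge_atTop 1).mono fun p hp =>
      ae_restrict_of_forall_mem measurableSet_Ioi (hgb p hp)) hb ?_
  filter_upwards [ae_restrict_mem measurableSet_Ioi,
    ae_restrict_of_ae ((countable_singleton (1 : ℝ)).ae_notMem volume)] with u hu hu1
  rcases lt_or_gt_of_ne (show u ≠ 1 from hu1) with hlt | hgt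
  · rw [indicator_of_mem (show u ∈ Iio 1 from hlt)]
    exact (hg.tendsto 0).comp
      (tendsto_rpow_atTop_of_base_lt_one u (by linarith [mem_Ioi.1 hu]) hlt)
  · rw [indicator_of_notMem (show u ∉ Iio 1 from not_lt.2 hgt.le)]
    exact (hgs.is_zero_at_infty.mono_left atTop_le_cocompact).comp
      (tendsto_rpow_atTop_of_base_gt_one u hgt)

lemma HasCompactSupport.integrableOn_Ioi_rpow_neg_mul (hg : Continuous g)
    (hgs : HasCompactSupport g) {α : ℝ} (h0 : 0 ≤ α) (h1 : α < 1) :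
    IntegrableOn (fun t => t ^ (-α) * g t) (Ioi 0) := by
  obtain ⟨b, hb, hgb⟩ := hgs.exists_integrableOn_bound_comp_rpow hg
  set p := (1 - α)⁻¹
  have hp : 0 < p := inv_pos.2 (sub_pos.2 h1)
  have hp1 : 1 ≤ p := one_le_inv₀ (sub_pos.2 h1) |>.2 (by linarith)
  have hcomp : IntegrableOn (fun u => p * g (u ^ p)) (Ioi 0) :=
    (hb.mono' (hg.measurable.comp (measurable_id.pow_const p)).aestronglyMeasurable
      (ae_restrict_of_forall_mem measurableSet_Ioi (hgb p hp1))).const_mul p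
  rw [← integrableOn_Ioi_comp_rpow_iff _ hp.ne']
  refine hcomp.congr_fun (fun u hu => ?_) measurableSet_Ioi
  have := rpow_sub_one_mul_rpow_rpow_neg hu (inv_mul_cancel₀ (sub_pos.2 h1).ne')
  simp only [smul_eq_mul, abs_of_pos hp]
  linear_combination -(p * g (u ^ p)) * this

lemma HasCompactSupport.integrable_abs_rpow_neg_mul (hg : Continuous g)
    (hgs : HasCompactSupport g) {α : ℝ} (h0 : 0 ≤ α) (h1 : α < 1) :
    Integrable (fun t => |t| ^ (-α) * g t) := by
  have hpos : IntegrableOn (fun t => |t| ^ (-α) * g t) (Ioi 0) :=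
    (hgs.integrableOn_Ioi_rpow_neg_mul hg h0 h1).congr_fun
      (fun t ht => by simp [abs_of_pos (mem_Ioi.1 ht)]) measurableSet_Ioi
  have hneg : IntegrableOn (fun t => |t| ^ (-α) * g t) (Iic 0) := by
    have := (hgs.comp_homeomorph (Homeomorph.neg ℝ)).integrableOn_Ioi_rpow_neg_mul
      (hg.comp continuous_neg) h0 h1
    rw [← (Measure.measurePreserving_neg volume).integrableOn_comp_preimage
      (Homeomorph.neg ℝ).measurableEmbedding] at this
    rw [integrableOn_Iic_iff_integrableOn_Iio]
    refine (this.congr_fun (fun t ht => ?_) (measurable_neg measurableSet_Ioi)).mono_set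
      (by simp)
    have ht : t < 0 := by simpa using ht
    simp only [Function.comp_apply, neg_neg, abs_of_neg ht]
  rw [← integrableOn_univ, ← Iic_union_Ioi (a := (0 : ℝ))]
  exact hneg.union hpos

lemma HasCompactSupport.integral_abs_rpow_neg_mul_eq_add (hg : Continuous g)
    (hgs : HasCompactSupport g) {α : ℝ} (h0 : 0 ≤ α) (h1 : α < 1) :
    ∫ t, |t| ^ (-α) * g t =
      (∫ t in Ioi 0, t ^ (-α) * g t) + ∫ t in Ioi 0, t ^ (-α) * g (-t) := by
  have hint := hgs.integrable_abs_rpow_neg_mul hg h0 h1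
  have hrefl := integral_comp_neg_Ioi 0 fun t => |t| ^ (-α) * g t
  rw [neg_zero] at hrefl
  rw [← intervalIntegral.integral_Iic_add_Ioi hint.integrableOn hint.integrableOn, add_comm,
    ← hrefl]
  congr 1 <;> refine setIntegral_congr_fun measurableSet_Ioi fun t ht => ?_ <;>
    simp [abs_of_pos (mem_Ioi.1 ht)]

lemma HasCompactSupport.tendsto_one_sub_mul_integral_Ioi_rpow_neg_mul
    (hg : Continuous g) (hgs : HasCompactSupport g) :
    Tendsto (fun α => (1 - α) * ∫ t in Ioi 0, t ^ (-α) * g t) (𝓝[<] 1) (𝓝 (g 0)) := by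
  have hp : Tendsto (fun α : ℝ => (1 - α)⁻¹) (𝓝[<] 1) atTop := by
    refine tendsto_inv_nhdsGT_zero.comp (tendsto_nhdsWithin_iff.2 ⟨?_, ?_⟩)
    · exact ((continuous_const.sub continuous_id).tendsto' 1 0 (sub_self 1)).mono_left
        nhdsWithin_le_nhds
    · filter_upwards [self_mem_nhdsWithin] with α hα using sub_pos.2 (mem_Iio.1 hα)
  refine ((hgs.tendsto_setIntegral_Ioi_comp_rpow_atTop hg).comp hp).congr' ?_
  filter_upwards [self_mem_nhdsWithin] with α (hα : α < 1)
  rw [Function.comp_apply, integral_Ioi_rpow_neg_mul_eq_integral_comp_rpow g hα, ← mul_assoc,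
    mul_inv_cancel₀ (sub_pos.2 hα).ne', one_mul]

lemma HasCompactSupport.tendsto_one_sub_div_two_mul_integral_abs_rpow_neg_mul
    (hg : Continuous g) (hgs : HasCompactSupport g) :
    Tendsto (fun α => ((1 - α) / 2) * ∫ t, |t| ^ (-α) * g t) (𝓝[<] 1) (𝓝 (g 0)) := by
  have hpos := hgs.tendsto_one_sub_mul_integral_Ioi_rpow_neg_mul hg
  have hneg := HasCompactSupport.tendsto_one_sub_mul_integral_Ioi_rpow_neg_mul
    (hg.comp continuous_neg) (hgs.comp_homeomorph (Homeomorph.neg ℝ))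
  have := (hpos.add hneg).div_const 2
  simp only [Function.comp_apply, neg_zero, add_self_div_two] at this
  refine this.congr' ?_
  filter_upwards [Ioo_mem_nhdsLT one_pos] with α hα
  rw [hgs.integral_abs_rpow_neg_mul_eq_add hg hα.1.le hα.2]
  ring

end CompactSupport

lemma integral_integral_mul_abs_sub_rpow_neg_mul_eq {φ ψ : ℝ → ℝ}
    (hφ : Continuous φ) (hφs : HasCompactSupport φ) (hψ : Continuous ψ)
    (hψs : HasCompactSupport ψ) {α : ℝ}
    (h0 : 0 ≤ α) (h1 : α < 1) :
    ∫ x, ∫ y, φ x * |x - y| ^ (-α) * ψ y = ∫ t, |t| ^ (-α) * crossCorrelation φ ψ t := by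
  set F : ℝ → ℝ → ℝ := fun x t => φ x * |t| ^ (-α) * ψ (x - t)
  have hF : Integrable (Function.uncurry F) (volume.prod volume) := by
    refine (integrable_prod_iff' ?_).2 ⟨Eventually.of_forall fun t => ?_, ?_⟩
    · have := hφ.measurable; have := hψ.measurable
      exact Measurable.aestronglyMeasurable (by fun_prop)
    · have : Continuous fun x => φ x * |t| ^ (-α) * ψ (x - t) := by fun_prop
      exact this.integrable_of_hasCompactSupport hφs.mul_right.mul_right
    · refine ((hφs.abs.crossCorrelation hψs.abs).integrable_abs_rpow_neg_mul
        (hφ.abs.locallyIntegrable.continuous_crossCorrelation hψ.abs hψs.abs) h0 h1).congr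
        (Eventually.of_forall fun t => ?_)
      simp only [crossCorrelation, ← integral_const_mul]
      congr 1; funext x
      simp only [Function.uncurry_apply_pair, norm_mul, norm_eq_abs, F,
        abs_of_nonneg (rpow_nonneg (abs_nonneg t) _)]
      ring
  calc ∫ x, ∫ y, φ x * |x - y| ^ (-α) * ψ y = ∫ x, ∫ t, F x t := by
        congr 1; funext x
        rw [← integral_sub_left_eq_self _ volume x]
        simp [F]
    _ = ∫ t, ∫ x, F x t := integral_integral_swap hF
    _ = ∫ t, |t| ^ (-α) * crossCorrelation φ ψ t := by
        congr 1; funext t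
        rw [crossCorrelation, ← integral_const_mul]
        congr 1; funext x
        ring

/-- For continuous compactly supported `φ, ψ : ℝ → ℝ`,
`lim_{α→1⁻} ((1−α)/2) ∫∫ φ(x) |x−y|^{-α} ψ(y) dx dy = ∫ φ(x) ψ(x) dx`:
the renormalized Riesz kernels converge to the white-noise covariance. -/
theorem riesz_kernel_tendsto_white_noise
    (φ ψ : ℝ → ℝ) (hφ : Continuous φ) (hφs : HasCompactSupport φ)
    (hψ : Continuous ψ) (hψs : HasCompactSupport ψ) :
    Tendsto (fun α : ℝ =>
        ((1 - α) / 2) * ∫ x : ℝ, ∫ y : ℝ, φ x * |x - y| ^ (-α) * ψ y)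
      (nhdsWithin 1 (Set.Iio 1)) (nhds (∫ x : ℝ, φ x * ψ x)) := by
  have h := (hφs.crossCorrelation hψs).tendsto_one_sub_div_two_mul_integral_abs_rpow_neg_mul
    (hφ.locallyIntegrable.continuous_crossCorrelation hψ hψs)
  rw [crossCorrelation_zero] at h
  refine h.congr' ?_
  filter_upwards [Ioo_mem_nhdsLT one_pos] with α hα
  rw [integral_integral_mul_abs_sub_rpow_neg_mul_eq hφ hφs hψ hψs hα.1.le hα.2]
end
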